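/- arXiv:2405.11339 — 5 statements merged into one kernel-verified Lean document; each statement's English description precedes it below -/
import Mathlib

section
/- Let α > 0, μ > 0 and let k ≥ 1 be a natural number. Then for every t > 0 the function t ↦ E_{α,1}(−μ t^α) is k times differentiable at t and its k-th derivative equals −μ t^{α−k} E_{α,α−k+1}(−μ t^α). -/
/-!
For `s > 0` put `e_β(s) = s^(β-1) E_{α,β}(-μ s^α) = ∑ⱼ (-μ)^j s^(jα+β-1) / Γ(jα+β)`.
Since `(a - 1) / Γ(a) = 1 / Γ(a - 1)`, differentiating a term lowers `β` by one, and the ratio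
test (`Γ(y + α) / Γ(y) → ∞` by log-convexity of `Γ`) gives the locally uniform bounds needed to
differentiate termwise. Hence `e_β' = e_{β-1}`, so the `k`-th derivative of
`e_1(s) = E_{α,1}(-μ s^α)` is `e_{1-k}`. For `k ≥ 1` the `j = 0` term of `E_{α,1-k}` vanishes,
as `1 / Γ` does at `1 - k`, and shifting the index gives `E_{α,1-k}(x) = x E_{α,α-k+1}(x)`.
-/

open Real

/-- The real two-parameter Mittag-Leffler function `E_{α,β}(x) = ∑_{j=0}^∞ x^j / Γ(jα + β)`.
`Real.Gamma` vanishes at the nonpositive integers, so the corresponding terms are `0`. -/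
noncomputable def mittagLefflerReal (α β : ℝ) (x : ℝ) : ℝ :=
  ∑' j : ℕ, x ^ j / Real.Gamma ((j : ℝ) * α + β)

open Filter Topology Set

namespace Real

theorem inv_Gamma_eq_mul_inv_Gamma_add_one (x : ℝ) : (Gamma x)⁻¹ = x * (Gamma (x + 1))⁻¹ := by
  rcases eq_or_ne x 0 with rfl | hx
  · simp
  rw [Gamma_add_one hx, mul_inv, ← mul_assoc, mul_inv_cancel₀ hx, one_mul]

theorem Gamma_mul_rpow_le_Gamma_add {y a : ℝ} (ha₀ : 0 < a) (ha₁ : a ≤ 1) (hy : 0 < y + a - 1) :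
    Gamma y * (y + a - 1) ^ a ≤ Gamma (y + a) := by
  rcases ha₁.eq_or_lt with rfl | ha₁
  · rw [add_sub_cancel_right] at hy ⊢
    rw [rpow_one, Gamma_add_one hy.ne', mul_comm]
  set s := y + a - 1
  have hGs : Gamma s = Gamma (y + a) / s := by
    rw [eq_div_iff hy.ne', mul_comm, ← Gamma_add_one hy.ne', sub_add_cancel]
  -- log-convexity of `Γ` between `s` and `s + 1 = y + a`, at the point `y`
  have hconv := Gamma_mul_add_mul_le_rpow_Gamma_mul_rpow_Gamma (s := s) (t := y + a) hy
    (by linarith) ha₀ (sub_pos.2 ha₁) (add_sub_cancel a 1)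
  have hGpos : 0 < Gamma (y + a) := Gamma_pos_of_pos (by linarith)
  rw [show a * s + (1 - a) * (y + a) = y by ring, hGs, div_rpow hGpos.le hy.le,
    div_mul_eq_mul_div, ← rpow_add hGpos, add_sub_cancel, rpow_one] at hconv
  rwa [← le_div_iff₀ (rpow_pos_of_pos hy a)]

theorem tendsto_Gamma_add_div_Gamma_atTop {α : ℝ} (hα : 0 < α) :
    Tendsto (fun y => Gamma (y + α) / Gamma y) atTop atTop := by
  set a := min α 1
  have ha : 0 < a := lt_min hα one_pos
  have hlow : ∀ᶠ y in atTop, (y + a - 1) ^ a ≤ Gamma (y + α) / Gamma y := by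
    filter_upwards [eventually_ge_atTop 2] with y hy
    have hGy : 0 < Gamma y := Gamma_pos_of_pos (by linarith)
    rw [le_div_iff₀ hGy, mul_comm]
    calc Gamma y * (y + a - 1) ^ a ≤ Gamma (y + a) :=
          Gamma_mul_rpow_le_Gamma_add ha (min_le_right _ _) (by linarith)
      _ ≤ Gamma (y + α) := Gamma_strictMonoOn_Ici.monotoneOn
          (by simp only [mem_Ici]; linarith) (by simp only [mem_Ici]; linarith)
          (by linarith [min_le_left α 1])
  refine tendsto_atTop_mono' _ hlow ((tendsto_rpow_atTop ha).comp ?_)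
  exact tendsto_atTop_add_const_right _ _ (tendsto_atTop_add_const_right _ _ tendsto_id)

theorem rpow_le_rpow_add_rpow_of_mem_Icc {a b x : ℝ} (ha : 0 < a) (hx : x ∈ Icc a b) (e : ℝ) :
    x ^ e ≤ a ^ e + b ^ e := by
  have hb : 0 < b := ha.trans_le (hx.1.trans hx.2)
  rcases le_or_gt 0 e with he | he
  · linarith [rpow_le_rpow (ha.le.trans hx.1) hx.2 he, rpow_pos_of_pos ha e]
  · linarith [rpow_le_rpow_of_nonpos ha hx.1 he.le, rpow_pos_of_pos hb e]

theorem hasDerivAt_inv_Gamma_mul_rpow_sub_one (a : ℝ) {s : ℝ} (hs : 0 < s) :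
    HasDerivAt (fun s => (Gamma a)⁻¹ * s ^ (a - 1)) ((Gamma (a - 1))⁻¹ * s ^ (a - 1 - 1)) s := by
  refine ((hasDerivAt_rpow_const (p := a - 1) (Or.inl hs.ne')).const_mul (Gamma a)⁻¹).congr_deriv ?_
  rw [inv_Gamma_eq_mul_inv_Gamma_add_one (a - 1), sub_add_cancel]
  ring

end Real

theorem summable_norm_pow_div_Gamma {α : ℝ} (hα : 0 < α) (β x : ℝ) :
    Summable fun j : ℕ => ‖x ^ j / Gamma (j * α + β)‖ := by
  have hy : Tendsto (fun j : ℕ => (j : ℝ) * α + β) atTop atTop :=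
    tendsto_atTop_add_const_right _ _ (tendsto_natCast_atTop_atTop.atTop_mul_const hα)
  have hratio := (Real.tendsto_Gamma_add_div_Gamma_atTop hα).comp hy
  refine summable_of_ratio_norm_eventually_le (r := 2⁻¹) (by norm_num) ?_
  filter_upwards [hy.eventually_ge_atTop 2, hratio.eventually_ge_atTop (2 * |x|)]
    with j hj hratio_j
  simp only [Function.comp_apply] at hratio_j
  have hGy : 0 < Gamma (j * α + β) := Gamma_pos_of_pos (by linarith)
  have hGyα : 0 < Gamma (j * α + β + α) := Gamma_pos_of_pos (by linarith)
  rw [le_div_iff₀ hGy] at hratio_j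
  push_cast
  simp only [norm_div, norm_pow, Real.norm_eq_abs, abs_abs, abs_of_pos hGy,
    show ((j : ℝ) + 1) * α + β = j * α + β + α by ring, abs_of_pos hGyα]
  rw [pow_succ, div_le_iff₀ hGyα]
  calc |x| ^ j * |x| = 2⁻¹ * (|x| ^ j / Gamma (j * α + β)) * (2 * |x| * Gamma (j * α + β)) := by
        field_simp
    _ ≤ 2⁻¹ * (|x| ^ j / Gamma (j * α + β)) * Gamma (j * α + β + α) := by
        gcongr

noncomputable def mittagLefflerKernel (α μ β s : ℝ) : ℝ :=
  s ^ (β - 1) * mittagLefflerReal α β (-μ * s ^ α)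

noncomputable def mittagLefflerKernelTerm (α μ β : ℝ) (j : ℕ) (s : ℝ) : ℝ :=
  (-μ) ^ j * ((Gamma (j * α + β))⁻¹ * s ^ (j * α + β - 1))

section MittagLefflerKernel

variable {α : ℝ} (μ β : ℝ)

theorem mittagLefflerKernelTerm_eq {s : ℝ} (hs : 0 < s) (j : ℕ) :
    mittagLefflerKernelTerm α μ β j s = s ^ (β - 1) * ((-μ * s ^ α) ^ j / Gamma (j * α + β)) := by
  rw [mittagLefflerKernelTerm, show (j : ℝ) * α + β - 1 = β - 1 + α * j by ring, rpow_add hs,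
    rpow_mul hs.le, rpow_natCast]
  ring

theorem summable_norm_mittagLefflerKernelTerm (hα : 0 < α) {s : ℝ} (hs : 0 < s) :
    Summable fun j => ‖mittagLefflerKernelTerm α μ β j s‖ := by
  simp_rw [mittagLefflerKernelTerm_eq μ β hs, norm_mul]
  exact (summable_norm_pow_div_Gamma hα β _).mul_left _

theorem mittagLefflerKernel_eq_tsum {s : ℝ} (hs : 0 < s) :
    mittagLefflerKernel α μ β s = ∑' j, mittagLefflerKernelTerm α μ β j s := by
  simp_rw [mittagLefflerKernelTerm_eq μ β hs, tsum_mul_left]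
  rfl

theorem hasDerivAt_mittagLefflerKernelTerm (j : ℕ) {s : ℝ} (hs : 0 < s) :
    HasDerivAt (mittagLefflerKernelTerm α μ β j)
      (mittagLefflerKernelTerm α μ (β - 1) j s) s := by
  refine ((hasDerivAt_inv_Gamma_mul_rpow_sub_one (j * α + β) hs).const_mul
    ((-μ) ^ j)).congr_deriv ?_
  rw [mittagLefflerKernelTerm, add_sub_assoc']

theorem hasDerivAt_mittagLefflerKernel (hα : 0 < α) {t : ℝ} (ht : 0 < t) :
    HasDerivAt (mittagLefflerKernel α μ β) (mittagLefflerKernel α μ (β - 1) t) t := by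
  set U := Ioo (t / 2) (2 * t)
  have hU : U ⊆ Ioi 0 := fun x hx => (half_pos ht).trans hx.1
  have htU : t ∈ U := ⟨by linarith, by linarith⟩
  have hbound : ∀ j, ∀ x ∈ U, ‖mittagLefflerKernelTerm α μ (β - 1) j x‖ ≤
      ‖mittagLefflerKernelTerm α μ (β - 1) j (t / 2)‖ +
        ‖mittagLefflerKernelTerm α μ (β - 1) j (2 * t)‖ := by
    intro j x hx
    simp only [mittagLefflerKernelTerm, norm_mul, Real.norm_eq_abs, ← mul_add]
    rw [abs_of_pos (rpow_pos_of_pos (hU hx) _), abs_of_pos (rpow_pos_of_pos (half_pos ht) _),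
      abs_of_pos (rpow_pos_of_pos (by linarith) _)]
    gcongr
    exact rpow_le_rpow_add_rpow_of_mem_Icc (half_pos ht) (Ioo_subset_Icc_self hx) _
  have hseries := hasDerivAt_tsum_of_isPreconnected
    ((summable_norm_mittagLefflerKernelTerm μ (β - 1) hα (half_pos ht)).add
      (summable_norm_mittagLefflerKernelTerm μ (β - 1) hα (by linarith : 0 < 2 * t)))
    isOpen_Ioo isPreconnected_Ioo
    (fun j x hx => hasDerivAt_mittagLefflerKernelTerm μ β j (hU hx)) hbound htU
    (summable_norm_mittagLefflerKernelTerm μ β hα ht).of_norm htU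
  rw [mittagLefflerKernel_eq_tsum μ (β - 1) ht]
  refine hseries.congr_of_eventuallyEq ?_
  filter_upwards [Ioi_mem_nhds ht] with x hx
  exact mittagLefflerKernel_eq_tsum μ β hx

theorem contDiffOn_mittagLefflerKernel (hα : 0 < α) (n : ℕ) :
    ContDiffOn ℝ n (mittagLefflerKernel α μ β) (Ioi 0) := by
  induction n generalizing β with
  | zero =>
    rw [Nat.cast_zero, contDiffOn_zero]
    exact fun t ht => (hasDerivAt_mittagLefflerKernel μ β hα ht).continuousAt.continuousWithinAt
  | succ n ih =>
    rw [Nat.cast_succ, contDiffOn_succ_iff_deriv_of_isOpen isOpen_Ioi]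
    refine ⟨fun t ht => (hasDerivAt_mittagLefflerKernel μ β hα ht).differentiableAt
      |>.differentiableWithinAt, by simp, ?_⟩
    exact (ih (β - 1)).congr fun t ht => (hasDerivAt_mittagLefflerKernel μ β hα ht).deriv

theorem iteratedDeriv_mittagLefflerKernel (hα : 0 < α) (n : ℕ) {t : ℝ} (ht : 0 < t) :
    iteratedDeriv n (mittagLefflerKernel α μ β) t = mittagLefflerKernel α μ (β - n) t := by
  induction n generalizing β with
  | zero => simp
  | succ n ih =>
    have hderiv : deriv (mittagLefflerKernel α μ β) =ᶠ[𝓝 t]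
        mittagLefflerKernel α μ (β - 1) := by
      filter_upwards [Ioi_mem_nhds ht] with x hx
      exact (hasDerivAt_mittagLefflerKernel μ β hα hx).deriv
    rw [iteratedDeriv_succ', hderiv.iteratedDeriv_eq, ih, Nat.cast_succ, sub_add_eq_sub_sub_swap]

end MittagLefflerKernel

theorem mittagLefflerReal_neg_natCast {α : ℝ} (hα : 0 < α) (n : ℕ) (x : ℝ) :
    mittagLefflerReal α (-n) x = x * mittagLefflerReal α (α - n) x := by
  have hsummable : Summable fun j : ℕ => x ^ j / Gamma (j * α + -n) :=
    (summable_norm_pow_div_Gamma hα _ x).of_norm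
  rw [mittagLefflerReal, hsummable.tsum_eq_zero_add, mittagLefflerReal, ← tsum_mul_left]
  simp only [Nat.cast_zero, zero_mul, zero_add, Gamma_neg_nat_eq_zero, div_zero, Nat.cast_succ]
  congr 1 with j
  rw [pow_succ', mul_div_assoc]
  ring_nf

theorem mittagLeffler_iteratedDeriv_general (α μ : ℝ) (hα : 0 < α)
    (k : ℕ) (hk : 1 ≤ k) (t : ℝ) (ht : 0 < t) :
    ContDiffAt ℝ k (fun s : ℝ => mittagLefflerReal α 1 (-μ * s ^ α)) t ∧
    iteratedDeriv k (fun s : ℝ => mittagLefflerReal α 1 (-μ * s ^ α)) t =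
      -μ * t ^ (α - (k : ℝ)) * mittagLefflerReal α (α - (k : ℝ) + 1) (-μ * t ^ α) := by
  have hkernel : (fun s : ℝ => mittagLefflerReal α 1 (-μ * s ^ α)) =
      mittagLefflerKernel α μ 1 := by
    ext s
    rw [mittagLefflerKernel, sub_self, rpow_zero, one_mul]
  obtain ⟨n, rfl⟩ := Nat.exists_eq_add_of_le' hk
  refine ⟨hkernel ▸ (contDiffOn_mittagLefflerKernel μ 1 hα _).contDiffAt (Ioi_mem_nhds ht), ?_⟩
  rw [hkernel, iteratedDeriv_mittagLefflerKernel μ 1 hα _ ht, mittagLefflerKernel,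
    show (1 : ℝ) - ↑(n + 1) = -n by push_cast; ring, mittagLefflerReal_neg_natCast hα,
    show α - ↑(n + 1) + 1 = α - n by push_cast; ring,
    show α - ↑(n + 1) = α + (-n - 1) by push_cast; ring, rpow_add ht]
  ring

/-- For `α > 0`, `μ > 0` and a natural number `k ≥ 1`, the function `t ↦ E_{α,1}(−μ t^α)`
is `k` times differentiable at every `t > 0` and its `k`-th derivative there equals
`−μ t^{α−k} E_{α,α−k+1}(−μ t^α)`. -/
theorem mittagLeffler_iteratedDeriv (α μ : ℝ) (hα : 0 < α) (hμ : 0 < μ)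
    (k : ℕ) (hk : 1 ≤ k) (t : ℝ) (ht : 0 < t) :
    ContDiffAt ℝ k (fun s : ℝ => mittagLefflerReal α 1 (-μ * s ^ α)) t ∧
    iteratedDeriv k (fun s : ℝ => mittagLefflerReal α 1 (-μ * s ^ α)) t =
      -μ * t ^ (α - (k : ℝ)) * mittagLefflerReal α (α - (k : ℝ) + 1) (-μ * t ^ α) :=
  mittagLeffler_iteratedDeriv_general α μ hα k hk t ht
end

section
/- For every α ∈ (0,1) and every μ ≥ 0 one has E_{α,α}(−μ) ≥ 0. -/
/-!
`H(s) = (s^α + μ)⁻¹` is the Laplace transform of `t ↦ t^{α-1} E_{α,α}(-μ t^α)`, so `E_{α,α}(-μ)` is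
the value at `t = 1` of the inverse Laplace transform of `H`, the limit of the Post–Widder
approximants `n^{n+1}/n! · (-1)^n H^{(n)}(n)`. These approximants are nonnegative because `H` is
completely monotone: it is `x ↦ x⁻¹` composed with `s ↦ s^α + μ`, a positive function whose
derivative is completely monotone when `α ≤ 1`.

To compute the limit, expand `H(s) = ∑ⱼ (-μ)^j s^{-(jα+α)}` for large `s` and differentiate
termwise. The Post–Widder approximant of `s^{-β}` is `n^{1-β} (β)_n / n!`, which tends to `1/Γ(β)`
by Euler's limit formula, and it decreases in `n` once `β ≥ 1` (Bernoulli's inequality). This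
monotonicity gives the domination needed to pass to the limit term by term, which yields
`∑ⱼ (-μ)^j / Γ(jα+α) = E_{α,α}(-μ)`.
-/

open Real

open Set Filter Topology
open scoped ContDiff Nat

section Pochhammer

variable {S : Type*} [Ring S] [PartialOrder S] [IsStrictOrderedRing S]

theorem ascPochhammer_eval_nonneg (n : ℕ) {s : S} (hs : 0 ≤ s) :
    0 ≤ (ascPochhammer S n).eval s := by
  rcases hs.eq_or_lt with rfl | hs
  · rw [ascPochhammer_eval_zero]; split_ifs <;> simp
  · exact (ascPochhammer_pos n s hs).le

theorem monotoneOn_ascPochhammer_eval (n : ℕ) :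
    MonotoneOn (ascPochhammer S n).eval (Ici 0) := by
  intro a ha b hb hab
  rw [mem_Ici] at ha hb
  have key := monotoneOn_descPochhammer_eval (S := S) n
    (sub_le_sub_right (le_add_of_nonneg_left ha) 1) (sub_le_sub_right (le_add_of_nonneg_left hb) 1)
    (by gcongr)
  simp only [descPochhammer_eval_eq_ascPochhammer] at key
  convert key using 2 <;> abel

end Pochhammer

theorem ascPochhammer_eval_eq_prod_range {R : Type*} [CommSemiring R] (n : ℕ) (r : R) :
    (ascPochhammer R n).eval r = ∏ j ∈ Finset.range n, (r + j) := by
  induction n with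
  | zero => simp
  | succ n ih => rw [ascPochhammer_succ_eval, ih, Finset.prod_range_succ]

theorem norm_iter_deriv_rpow_neg {β : ℝ} (hβ : 0 ≤ β) (n : ℕ) {x : ℝ} (hx : 0 < x) :
    ‖deriv^[n] (fun s => s ^ (-β)) x‖ = (ascPochhammer ℝ n).eval β * x ^ (-β - n) := by
  have hsign := ascPochhammer_eval_neg_eq_descPochhammer ℝ (-β) n
  rw [neg_neg] at hsign
  have habs : ‖(descPochhammer ℝ n).eval (-β)‖ = (ascPochhammer ℝ n).eval β := by
    rw [← norm_of_nonneg (ascPochhammer_eval_nonneg n hβ), hsign, norm_mul, norm_pow, norm_neg,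
      norm_one, one_pow, one_mul]
  rw [iter_deriv_rpow_const, norm_mul, norm_of_nonneg (rpow_nonneg hx.le _), habs]

theorem norm_iter_deriv_rpow_neg_le {β : ℝ} (hβ : 0 ≤ β) (n : ℕ) {x y : ℝ} (hx : 0 < x)
    (hxy : x ≤ y) :
    ‖deriv^[n] (fun s => s ^ (-β)) y‖ ≤ ‖deriv^[n] (fun s => s ^ (-β)) x‖ := by
  rw [norm_iter_deriv_rpow_neg hβ n hx, norm_iter_deriv_rpow_neg hβ n (hx.trans_le hxy)]
  have hexp : -β - n ≤ 0 := by linarith [n.cast_nonneg' (α := ℝ)]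
  exact mul_le_mul_of_nonneg_left (rpow_le_rpow_of_nonpos hx hxy hexp)
    (ascPochhammer_eval_nonneg n hβ)

theorem hasDerivAt_iter_deriv_rpow_const (p : ℝ) (n : ℕ) {x : ℝ} (hx : x ≠ 0) :
    HasDerivAt (deriv^[n] fun s => s ^ p) (deriv^[n + 1] (fun s => s ^ p) x) x := by
  rw [Function.iterate_succ_apply']
  refine DifferentiableAt.hasDerivAt ?_
  rw [show (deriv^[n] fun s => s ^ p) = fun s => (descPochhammer ℝ n).eval p * s ^ (p - n) from
    funext (iter_deriv_rpow_const p · n)]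
  exact (differentiableAt_rpow_const_of_ne _ hx).const_mul _

theorem rpow_neg_natCast_mul_add_self {x : ℝ} (hx : 0 ≤ x) (α : ℝ) (j : ℕ) :
    x ^ (-(j * α + α)) = ((x ^ α) ^ (j + 1))⁻¹ := by
  rw [← rpow_natCast, ← rpow_mul hx, ← rpow_neg hx]
  push_cast; ring_nf

def CompletelyMonotone (f : ℝ → ℝ) : Prop :=
  ContDiffOn ℝ ∞ f (Ioi 0) ∧ ∀ n : ℕ, ∀ x > 0, 0 ≤ (-1) ^ n * iteratedDeriv n f x

namespace CompletelyMonotone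

variable {f g w : ℝ → ℝ}

theorem contDiffAt (hf : CompletelyMonotone f) {x : ℝ} (hx : 0 < x) {n : ℕ} :
    ContDiffAt ℝ n f x :=
  (hf.1.contDiffAt (Ioi_mem_nhds hx)).of_le (by exact_mod_cast le_top)

theorem differentiableAt (hf : CompletelyMonotone f) {x : ℝ} (hx : 0 < x) :
    DifferentiableAt ℝ f x :=
  (hf.contDiffAt hx (n := 1)).differentiableAt one_ne_zero

theorem nonneg (hf : CompletelyMonotone f) {x : ℝ} (hx : 0 < x) : 0 ≤ f x := by
  simpa using hf.2 0 x hx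

theorem neg_deriv (hf : CompletelyMonotone f) : CompletelyMonotone (-deriv f) := by
  refine ⟨(hf.1.deriv_of_isOpen isOpen_Ioi le_rfl).neg, fun n x hx => ?_⟩
  have := hf.2 (n + 1) x hx
  rw [iteratedDeriv_succ'] at this
  rw [iteratedDeriv_neg, pow_succ] at *
  linarith

theorem of_neg_deriv_eq_add {P : (ℝ → ℝ) → Prop}
    (hsmooth : ∀ h, P h → ContDiffOn ℝ ∞ h (Ioi 0)) (hnonneg : ∀ h, P h → ∀ x > 0, 0 ≤ h x)
    (hderiv : ∀ h, P h → ∃ a b, P a ∧ P b ∧ EqOn (-deriv h) (a + b) (Ioi 0))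
    {h : ℝ → ℝ} (hh : P h) : CompletelyMonotone h := by
  refine ⟨hsmooth h hh, fun n => ?_⟩
  induction n generalizing h with
  | zero => simpa using hnonneg h hh
  | succ n ih =>
    intro x hx
    obtain ⟨a, b, ha, hb, hab⟩ := hderiv h hh
    have hcd : ∀ u, P u → ContDiffAt ℝ n u x := fun u hu =>
      ((hsmooth u hu).contDiffAt (Ioi_mem_nhds hx)).of_le (by exact_mod_cast le_top)
    have hsplit : -iteratedDeriv (n + 1) h x = iteratedDeriv n a x + iteratedDeriv n b x := by
      rw [iteratedDeriv_succ', ← iteratedDeriv_neg, hab.iteratedDeriv_of_isOpen isOpen_Ioi n hx,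
        iteratedDeriv_add (hcd a ha) (hcd b hb)]
    have hsign : (-1) ^ (n + 1) * iteratedDeriv (n + 1) h x
        = (-1) ^ n * iteratedDeriv n a x + (-1) ^ n * iteratedDeriv n b x := by
      rw [pow_succ]; linear_combination (-1) ^ n * hsplit
    rw [hsign]
    exact add_nonneg (ih ha x hx) (ih hb x hx)

theorem mul (hf : CompletelyMonotone f) (hg : CompletelyMonotone g) :
    CompletelyMonotone (f * g) := by
  refine of_neg_deriv_eq_add (P := fun h => ∃ f g, CompletelyMonotone f ∧ CompletelyMonotone g ∧
    h = f * g) ?_ ?_ ?_ ⟨f, g, hf, hg, rfl⟩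
  · rintro _ ⟨f, g, hf, hg, rfl⟩
    exact hf.1.mul hg.1
  · rintro _ ⟨f, g, hf, hg, rfl⟩ x hx
    exact mul_nonneg (hf.nonneg hx) (hg.nonneg hx)
  · rintro _ ⟨f, g, hf, hg, rfl⟩
    refine ⟨_, _, ⟨_, _, hf.neg_deriv, hg, rfl⟩, ⟨_, _, hf, hg.neg_deriv, rfl⟩, fun x hx => ?_⟩
    simp only [Pi.neg_apply, Pi.add_apply, Pi.mul_apply,
      deriv_mul (hf.differentiableAt hx) (hg.differentiableAt hx)]
    ring

theorem comp_mul (hf : CompletelyMonotone f) (hw : CompletelyMonotone w)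
    (hg : ContDiffOn ℝ ∞ g (Ioi 0)) (hg0 : MapsTo g (Ioi 0) (Ioi 0))
    (hg' : CompletelyMonotone (deriv g)) : CompletelyMonotone (fun x => f (g x) * w x) := by
  refine of_neg_deriv_eq_add (P := fun h => ∃ f w, CompletelyMonotone f ∧ CompletelyMonotone w ∧
    h = fun x => f (g x) * w x) ?_ ?_ ?_ ⟨f, w, hf, hw, rfl⟩
  · rintro _ ⟨f, w, hf, hw, rfl⟩
    exact (hf.1.comp hg hg0).mul hw.1
  · rintro _ ⟨f, w, hf, hw, rfl⟩ x hx
    exact mul_nonneg (hf.nonneg (hg0 hx)) (hw.nonneg hx)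
  · rintro _ ⟨f, w, hf, hw, rfl⟩
    refine ⟨_, _, ⟨_, _, hf.neg_deriv, hg'.mul hw, rfl⟩, ⟨_, _, hf, hw.neg_deriv, rfl⟩,
      fun x hx => ?_⟩
    have hgx : DifferentiableAt ℝ g x :=
      (hg.contDiffAt (Ioi_mem_nhds hx)).differentiableAt (by simp)
    have hfgx : DifferentiableAt ℝ (fun x => f (g x)) x :=
      (hf.differentiableAt (hg0 hx)).comp x hgx
    have hfg : deriv (fun x => f (g x)) x = deriv f (g x) * deriv g x :=
      deriv_comp (h₂ := f) x (hf.differentiableAt (hg0 hx)) hgx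
    simp only [Pi.neg_apply, Pi.add_apply, Pi.mul_apply]
    rw [deriv_fun_mul hfgx (hw.differentiableAt hx), hfg]
    ring

theorem const {c : ℝ} (hc : 0 ≤ c) : CompletelyMonotone (fun _ => c) :=
  ⟨contDiffOn_const, fun n x _ => by rw [iteratedDeriv_const]; split_ifs <;> simp [*]⟩

theorem comp (hf : CompletelyMonotone f) (hg : ContDiffOn ℝ ∞ g (Ioi 0))
    (hg0 : MapsTo g (Ioi 0) (Ioi 0)) (hg' : CompletelyMonotone (deriv g)) :
    CompletelyMonotone (fun x => f (g x)) := by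
  simpa using hf.comp_mul (const zero_le_one) hg hg0 hg'

theorem const_mul (hf : CompletelyMonotone f) {c : ℝ} (hc : 0 ≤ c) :
    CompletelyMonotone (fun x => c * f x) :=
  ⟨contDiffOn_const.mul hf.1, fun n x hx => by
    rw [iteratedDeriv_const_mul_field, mul_left_comm]; exact mul_nonneg hc (hf.2 n x hx)⟩

end CompletelyMonotone

theorem completelyMonotone_rpow {p : ℝ} (hp : p ≤ 0) : CompletelyMonotone (fun x => x ^ p) := by
  refine ⟨fun x hx => (contDiffAt_rpow_const_of_ne (ne_of_gt hx)).contDiffWithinAt,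
    fun n x hx => ?_⟩
  rw [iteratedDeriv_eq_iterate, iter_deriv_rpow_const, ← mul_assoc,
    ← ascPochhammer_eval_neg_eq_descPochhammer]
  exact mul_nonneg (ascPochhammer_eval_nonneg n (neg_nonneg.2 hp)) (rpow_nonneg hx.le _)

theorem completelyMonotone_inv_rpow_add {α μ : ℝ} (hα0 : 0 < α) (hα1 : α ≤ 1) (hμ : 0 ≤ μ) :
    CompletelyMonotone (fun s => (s ^ α + μ)⁻¹) := by
  have hderiv : (deriv fun s => s ^ α + μ) = fun s => α * s ^ (α - 1) := by
    ext s; simp [Real.deriv_rpow_const]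
  simpa [rpow_neg_one] using (completelyMonotone_rpow (p := -1) (by norm_num)).comp
    (fun s hs =>
      ((contDiffAt_rpow_const_of_ne (ne_of_gt hs)).add contDiffAt_const).contDiffWithinAt)
    (fun s hs => add_pos_of_pos_of_nonneg (rpow_pos_of_pos hs α) hμ)
    (hderiv ▸ (completelyMonotone_rpow (by linarith)).const_mul hα0.le)

/-- The `n`-th Post–Widder approximant, at `t = 1`, of the inverse Laplace transform of `F`. -/
noncomputable def postWidder (F : ℝ → ℝ) (n : ℕ) : ℝ :=
  (n : ℝ) ^ (n + 1) / n ! * ((-1) ^ n * iteratedDeriv n F n)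

theorem CompletelyMonotone.postWidder_nonneg {F : ℝ → ℝ} (hF : CompletelyMonotone F) (n : ℕ) :
    0 ≤ postWidder F n := by
  rcases Nat.eq_zero_or_pos n with rfl | hn
  · simp [postWidder]
  · exact mul_nonneg (by positivity) (hF.2 n n (Nat.cast_pos.2 hn))

noncomputable def invGammaApprox (β : ℝ) (n : ℕ) : ℝ :=
  (n : ℝ) ^ (1 - β) * (ascPochhammer ℝ n).eval β / n !

theorem invGammaApprox_nonneg {β : ℝ} (hβ : 0 ≤ β) (n : ℕ) : 0 ≤ invGammaApprox β n := by
  have := ascPochhammer_eval_nonneg n hβ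
  unfold invGammaApprox
  positivity

theorem invGammaApprox_succ_eq_div_GammaSeq (β : ℝ) {m : ℕ} (hm : m ≠ 0) :
    invGammaApprox β (m + 1) = ((m : ℝ) / (m + 1)) ^ β / GammaSeq β m := by
  have hm0 : (0 : ℝ) < m := by positivity
  rw [invGammaApprox, GammaSeq, ascPochhammer_eval_eq_prod_range, div_div_eq_mul_div,
    div_rpow hm0.le (by positivity), rpow_sub (by positivity), rpow_one, Nat.factorial_succ]
  push_cast
  field_simp

theorem tendsto_invGammaApprox {β : ℝ} (hβ : Gamma β ≠ 0) :
    Tendsto (invGammaApprox β) atTop (𝓝 (Gamma β)⁻¹) := by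
  rw [← tendsto_add_atTop_iff_nat 1]
  have hratio : Tendsto (fun m : ℕ => ((m : ℝ) / (m + 1)) ^ β) atTop (𝓝 1) := by
    have h := (continuousAt_rpow_const 1 β (Or.inl one_ne_zero)).tendsto.comp
      (tendsto_natCast_div_add_atTop (1 : ℝ))
    rwa [one_rpow] at h
  have h := hratio.div (GammaSeq_tendsto_Gamma β) hβ
  rw [one_div] at h
  refine h.congr' ?_
  filter_upwards [eventually_ne_atTop 0] with m hm
  exact (invGammaApprox_succ_eq_div_GammaSeq β hm).symm

theorem invGammaApprox_succ_le {β : ℝ} (hβ : 1 ≤ β) {n : ℕ} (hn : n ≠ 0) :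
    invGammaApprox β (n + 1) ≤ invGammaApprox β n := by
  have hn0 : (0 : ℝ) < n := by positivity
  have hbernoulli : 1 + β * (n : ℝ)⁻¹ ≤ (1 + (n : ℝ)⁻¹) ^ β :=
    one_add_mul_self_le_rpow_one_add (by linarith [inv_pos.2 hn0]) hβ
  have key : (β + n) / (n + 1 : ℝ) ^ β ≤ n / (n : ℝ) ^ β := by
    have h1 : 1 + β * (n : ℝ)⁻¹ = (β + n) / n := by field_simp; ring
    have h2 : (1 + (n : ℝ)⁻¹) ^ β = (n + 1 : ℝ) ^ β / (n : ℝ) ^ β := by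
      rw [← div_rpow (by positivity) hn0.le]; congr 1; field_simp
    rw [h1, h2, div_le_div_iff₀ hn0 (by positivity)] at hbernoulli
    rw [div_le_div_iff₀ (by positivity) (by positivity)]
    linarith
  have hA := ascPochhammer_pos n β (by linarith)
  simp only [invGammaApprox, ascPochhammer_succ_eval, Nat.factorial_succ, Nat.cast_mul,
    Nat.cast_succ, rpow_sub (by positivity : (0 : ℝ) < n + 1), rpow_sub hn0, rpow_one]
  rw [div_le_div_iff₀ (by positivity) (by positivity)]
  calc _ = (β + n) / (n + 1 : ℝ) ^ β * ((ascPochhammer ℝ n).eval β * (n + 1) * n !) := by ring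
    _ ≤ n / (n : ℝ) ^ β * ((ascPochhammer ℝ n).eval β * (n + 1) * n !) :=
      mul_le_mul_of_nonneg_right key (by positivity)
    _ = _ := by ring

theorem postWidder_rpow_neg (β : ℝ) {n : ℕ} (hn : n ≠ 0) :
    postWidder (fun s => s ^ (-β)) n = invGammaApprox β n := by
  have hn0 : (0 : ℝ) < n := by positivity
  have hsign := ascPochhammer_eval_neg_eq_descPochhammer ℝ (-β) n
  rw [neg_neg] at hsign
  have hpow : (n : ℝ) ^ (n + 1) * (n : ℝ) ^ (-β - n) = (n : ℝ) ^ (1 - β) := by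
    rw [← rpow_natCast, ← rpow_add hn0]; push_cast; ring_nf
  rw [postWidder, invGammaApprox, iteratedDeriv_eq_iterate, iter_deriv_rpow_const, hsign, ← hpow]
  ring

theorem iteratedDeriv_tsum_rpow_neg {c β : ℕ → ℝ} {a : ℝ} (ha : 0 < a) (hβ : ∀ j, 0 ≤ β j)
    (hsum : ∀ n, Summable fun j => ‖c j * deriv^[n] (fun s => s ^ (-β j)) a‖) (n : ℕ) {s : ℝ}
    (hs : a < s) :
    iteratedDeriv n (fun s => ∑' j, c j * s ^ (-β j)) s
      = ∑' j, c j * deriv^[n] (fun s => s ^ (-β j)) s := by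
  have hbound : ∀ m j, ∀ y ∈ Ioi a,
      ‖c j * deriv^[m] (fun s => s ^ (-β j)) y‖ ≤ ‖c j * deriv^[m] (fun s => s ^ (-β j)) a‖ :=
    fun m j y hy => by
      rw [norm_mul, norm_mul]
      exact mul_le_mul_of_nonneg_left (norm_iter_deriv_rpow_neg_le (hβ j) m ha (le_of_lt hy))
        (norm_nonneg _)
  induction n generalizing s with
  | zero => simp
  | succ n ih =>
    have hev : iteratedDeriv n (fun s => ∑' j, c j * s ^ (-β j))
        =ᶠ[𝓝 s] fun y => ∑' j, c j * deriv^[n] (fun s => s ^ (-β j)) y := by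
      filter_upwards [Ioi_mem_nhds hs] with y hy using ih hy
    rw [iteratedDeriv_succ, hev.deriv_eq]
    refine (hasDerivAt_tsum_of_isPreconnected (hsum (n + 1)) isOpen_Ioi isPreconnected_Ioi
      (fun j y hy => ?_) (hbound (n + 1)) hs ?_ hs).deriv
    · exact (hasDerivAt_iter_deriv_rpow_const _ n (ha.trans hy).ne').const_mul (c j)
    · exact (hsum n).of_norm_bounded (fun j => by simpa using hbound n j s hs)

theorem postWidder_tsum_rpow_neg {c β : ℕ → ℝ} {a : ℝ} (ha : 0 < a) (hβ : ∀ j, 0 ≤ β j)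
    (hsum : ∀ n, Summable fun j => ‖c j * deriv^[n] (fun s => s ^ (-β j)) a‖) {n : ℕ}
    (hn : a < n) :
    postWidder (fun s => ∑' j, c j * s ^ (-β j)) n
      = ∑' j, c j * postWidder (fun s => s ^ (-β j)) n := by
  rw [postWidder, iteratedDeriv_tsum_rpow_neg ha hβ hsum n hn, ← tsum_mul_left, ← tsum_mul_left]
  congr 1; ext j
  rw [postWidder, iteratedDeriv_eq_iterate]
  ring

theorem inv_rpow_add_eq_tsum {α μ s : ℝ} (hs : 0 < s) (hμ : |μ| < s ^ α) :
    (s ^ α + μ)⁻¹ = ∑' j : ℕ, (-μ) ^ j * s ^ (-(j * α + α)) := by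
  have hy : 0 < s ^ α := (abs_nonneg μ).trans_lt hμ
  have hq : ‖-μ / s ^ α‖ < 1 := by
    rwa [norm_div, norm_neg, norm_eq_abs, norm_of_nonneg hy.le, div_lt_one hy]
  have hterm : ∀ j : ℕ, (-μ) ^ j * s ^ (-(j * α + α)) = (-μ / s ^ α) ^ j * (s ^ α)⁻¹ := by
    intro j
    rw [rpow_neg_natCast_mul_add_self hs.le, div_pow, pow_succ]
    field_simp
  rw [tsum_congr hterm, tsum_mul_right, tsum_geometric_of_norm_lt_one hq]
  field_simp
  ring

theorem summable_pow_mul_rpow_mul_ascPochhammer {α μ x : ℝ} (hα0 : 0 ≤ α) (hα1 : α ≤ 1)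
    (hx : 0 < x) (hμ : 0 ≤ μ) (hμx : μ < x ^ α) (n : ℕ) :
    Summable fun j : ℕ => μ ^ j * x ^ (-(j * α + α)) * (ascPochhammer ℝ n).eval (j * α + α) := by
  have hy : 0 < x ^ α := hμ.trans_lt hμx
  have hq : ‖μ / x ^ α‖ < 1 := by
    rwa [norm_div, norm_of_nonneg hμ, norm_of_nonneg hy.le, div_lt_one hy]
  refine Summable.of_nonneg_of_le (fun j => ?_) (fun j => ?_)
    ((summable_choose_mul_geometric_of_norm_lt_one n hq).mul_left ((x ^ α)⁻¹ * n !))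
  · have := ascPochhammer_eval_nonneg n (show 0 ≤ (j : ℝ) * α + α by positivity)
    positivity
  · have hβ : (j : ℝ) * α + α ≤ (j + 1 : ℕ) := by push_cast; nlinarith
    have hmono := monotoneOn_ascPochhammer_eval n (mem_Ici.2 (by positivity))
      (mem_Ici.2 (by positivity)) hβ
    simp only at hmono
    rw [ascPochhammer_nat_eq_natCast_ascFactorial, Nat.ascFactorial_eq_factorial_mul_choose]
      at hmono
    rw [rpow_neg_natCast_mul_add_self hx.le, div_pow, pow_succ]
    calc μ ^ j * ((x ^ α) ^ j * x ^ α)⁻¹ * (ascPochhammer ℝ n).eval (j * α + α)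
        ≤ μ ^ j * ((x ^ α) ^ j * x ^ α)⁻¹ * ((n ! * (j + n).choose n : ℕ) : ℝ) := by
          gcongr
      _ = _ := by push_cast; field_simp

theorem postWidder_inv_rpow_add {α μ a : ℝ} (hα0 : 0 < α) (hα1 : α ≤ 1) (hμ : 0 ≤ μ) (ha : 0 < a)
    (hμa : μ < a ^ α) {n : ℕ} (hn : a < n) :
    postWidder (fun s => (s ^ α + μ)⁻¹) n = ∑' j : ℕ, (-μ) ^ j * invGammaApprox (j * α + α) n := by
  have hβ : ∀ j : ℕ, 0 ≤ (j : ℝ) * α + α := fun j => by positivity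
  have hexpand : (fun s => (s ^ α + μ)⁻¹) =ᶠ[𝓝 (n : ℝ)]
      fun s => ∑' j : ℕ, (-μ) ^ j * s ^ (-((j : ℝ) * α + α)) := by
    filter_upwards [Ioi_mem_nhds hn] with s hs
    exact inv_rpow_add_eq_tsum (ha.trans hs) (by
      rw [abs_of_nonneg hμ]; exact hμa.trans (rpow_lt_rpow ha.le hs hα0))
  have hsum : ∀ m, Summable fun j : ℕ =>
      ‖(-μ) ^ j * deriv^[m] (fun s => s ^ (-((j : ℝ) * α + α))) a‖ := fun m =>
    ((summable_pow_mul_rpow_mul_ascPochhammer hα0.le hα1 ha hμ hμa m).mul_left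
      (a ^ (-(m : ℝ)))).congr fun j => by
        rw [norm_mul, norm_iter_deriv_rpow_neg (hβ j) m ha, norm_pow, norm_neg, norm_of_nonneg hμ,
          sub_eq_add_neg, rpow_add ha]
        ring
  have hn0 : n ≠ 0 := (Nat.cast_pos.1 (ha.trans hn)).ne'
  have hcongr : postWidder (fun s => (s ^ α + μ)⁻¹) n
      = postWidder (fun s => ∑' j : ℕ, (-μ) ^ j * s ^ (-((j : ℝ) * α + α))) n := by
    simp only [postWidder, hexpand.iteratedDeriv_eq]
  rw [hcongr, postWidder_tsum_rpow_neg ha hβ hsum hn]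
  simp only [postWidder_rpow_neg _ hn0]

theorem tendsto_tsum_invGammaApprox {α μ : ℝ} (hα0 : 0 < α) (hα1 : α ≤ 1) (hμ : 0 ≤ μ) :
    Tendsto (fun n => ∑' j : ℕ, (-μ) ^ j * invGammaApprox (j * α + α) n) atTop
      (𝓝 (mittagLefflerReal α α (-μ))) := by
  obtain ⟨N, hNμ, hN⟩ : ∃ N : ℕ, μ < (N : ℝ) ^ α ∧ N ≠ 0 :=
    (((tendsto_rpow_atTop hα0).comp tendsto_natCast_atTop_atTop).eventually_gt_atTop μ |>.and
      (eventually_ne_atTop 0)).exists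
  have hN0 : (0 : ℝ) < N := by positivity
  have hfin : {j : ℕ | ¬ 1 ≤ (j : ℝ) * α + α}.Finite := by
    rw [← eventually_cofinite, Nat.cofinite_eq_atTop]
    exact (tendsto_atTop_add_const_right _ _
      (tendsto_natCast_atTop_atTop.atTop_mul_const hα0)).eventually_ge_atTop 1
  -- Only finitely many `j` have `jα + α < 1`; for them a bound that holds eventually suffices.
  set e : ℕ → ℝ := fun j => if 1 ≤ (j : ℝ) * α + α then 0 else (Gamma (j * α + α))⁻¹ + 1
  have hsmall : ∀ᶠ n in atTop, ∀ j ∈ {j : ℕ | ¬ 1 ≤ (j : ℝ) * α + α},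
      invGammaApprox (j * α + α) n ≤ (Gamma (j * α + α))⁻¹ + 1 :=
    (eventually_all_finite hfin).2 fun j _ => ((tendsto_invGammaApprox
      (Gamma_pos_of_pos (by positivity)).ne').eventually_lt_const (lt_add_one _)).mono
        fun _ => le_of_lt
  rw [mittagLefflerReal]
  simp_rw [div_eq_mul_inv]
  refine tendsto_tsum_of_dominated_convergence
    (bound := fun j => μ ^ j * invGammaApprox (j * α + α) N + μ ^ j * e j) ?_
    (fun j => (tendsto_invGammaApprox (Gamma_pos_of_pos (by positivity)).ne').const_mul _) ?_
  · refine Summable.add ?_ (summable_of_hasFiniteSupport (hfin.subset fun j hj h => hj ?_))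
    · refine ((summable_pow_mul_rpow_mul_ascPochhammer hα0.le hα1 hN0 hμ hNμ N).mul_left
        ((N : ℝ) / N !)).congr fun j => ?_
      rw [invGammaApprox, sub_eq_add_neg, rpow_add hN0, rpow_one]
      ring
    · simp [e, h]
  · filter_upwards [eventually_ge_atTop N, hsmall] with n hn hsmall
    intro j
    have hβ : 0 < (j : ℝ) * α + α := by positivity
    rw [norm_mul, norm_pow, norm_neg, norm_of_nonneg hμ,
      norm_of_nonneg (invGammaApprox_nonneg hβ.le n), ← mul_add]
    gcongr
    by_cases h : 1 ≤ (j : ℝ) * α + α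
    · simp only [e, if_pos h, add_zero]
      exact antitoneOn_nat_Ici_of_succ_le (fun m hm => invGammaApprox_succ_le h (by omega))
        (mem_Ici.2 le_rfl) (mem_Ici.2 hn) hn
    · simp only [e, if_neg h]
      linarith [hsmall j h, invGammaApprox_nonneg hβ.le N]

/-- For `α ∈ (0,1)` and `μ ≥ 0`, `E_{α,α}(−μ) ≥ 0`. -/
theorem mittagLeffler_nonneg (α μ : ℝ) (hα0 : 0 < α) (hα1 : α < 1) (hμ : 0 ≤ μ) :
    0 ≤ mittagLefflerReal α α (-μ) := by
  set a := (μ + 1) ^ α⁻¹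
  have ha : 0 < a := by positivity
  have hμa : μ < a ^ α := by rw [rpow_inv_rpow (by linarith) hα0.ne']; linarith
  refine ge_of_tendsto (tendsto_tsum_invGammaApprox hα0 hα1.le hμ) ?_
  filter_upwards [tendsto_natCast_atTop_atTop.eventually_gt_atTop a] with n hn
  rw [← postWidder_inv_rpow_add hα0 hα1.le hμ ha hμa hn]
  exact (completelyMonotone_inv_rpow_add hα0 hα1.le hμ).postWidder_nonneg n
end

section
/- Let α ∈ (0,1) and μ ≥ 0, and define y(t) = E_{α,1}(−μ t^α) for t ≥ 0. Then y(0) = 1, y is differentiable on (0,∞), for every t > 0 the function s ↦ (t−s)^{−α} y′(s) is integrable on (0,t), and the Caputo fractional derivative satisfies ∂_t^α y(t) = (1/Γ(1−α)) ∫_0^t (t−s)^{−α} y′(s) ds = −μ E_{α,1}(−μ t^α) for every t > 0. -/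
open Real MeasureTheory

/-!
Since `Γ(r) ≥ e^{-ρ} ρ^{r-2}` for every `ρ ≥ 1`, the Gamma function outgrows every exponential,
so all the series `∑ x^j / Γ(jα + β)` converge absolutely. This justifies differentiating
`y(t) = ∑ (-μ)^j t^{jα} / Γ(jα + 1)` term by term, using `(t^a / Γ(a+1))' = t^{a-1} / Γ(a)`,
which gives `y'(t) = -μ t^{α-1} E_{α,α}(-μ t^α)`. The Caputo integral is then computed term by
term with the Beta integral `∫_0^t (t-s)^{b-1} s^{a-1} ds = Γ(a)Γ(b)/Γ(a+b) t^{a+b-1}`: the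
Riemann–Liouville integral of order `1 - α` turns `t^{α-1} E_{α,α}(λ t^α)` into
`Γ(1-α) E_{α,1}(λ t^α)`.
-/

open Set Filter
open scoped Nat

namespace Real

theorem factorial_le_Gamma {n : ℕ} {r : ℝ} (hr : 2 ≤ r) (hn : (n : ℝ) + 1 ≤ r) :
    (n ! : ℝ) ≤ Gamma r := by
  rcases n.eq_zero_or_pos with rfl | hn0
  · simpa using Gamma_strictMonoOn_Ici.monotoneOn Set.self_mem_Ici hr hr
  · rw [← Gamma_nat_eq_factorial]
    exact Gamma_strictMonoOn_Ici.monotoneOn (show (2 : ℝ) ≤ n + 1 by norm_cast; omega) hr hn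

theorem rpow_sub_two_le_exp_mul_Gamma {ρ r : ℝ} (hρ : 1 ≤ ρ) (hr : 2 ≤ r) :
    ρ ^ (r - 2) ≤ exp ρ * Gamma r := by
  have hfloor : 1 ≤ ⌊r⌋₊ := Nat.one_le_floor_iff r |>.2 (by linarith)
  have hn : ((⌊r⌋₊ - 1 : ℕ) : ℝ) = ⌊r⌋₊ - 1 := by push_cast [hfloor]; ring
  calc ρ ^ (r - 2) ≤ ρ ^ ((⌊r⌋₊ - 1 : ℕ) : ℝ) :=
        rpow_le_rpow_of_exponent_le hρ (by rw [hn]; linarith [Nat.lt_floor_add_one r])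
    _ = ρ ^ (⌊r⌋₊ - 1) := rpow_natCast ρ _
    _ ≤ exp ρ * (⌊r⌋₊ - 1)! := by
        have := pow_div_factorial_le_exp ρ (by linarith) (⌊r⌋₊ - 1)
        rwa [div_le_iff₀ (by positivity)] at this
    _ ≤ exp ρ * Gamma r := by
        gcongr
        exact factorial_le_Gamma hr (by rw [hn]; linarith [Nat.floor_le (by linarith : 0 ≤ r)])

end Real

variable {α : ℝ}

theorem summable_pow_div_Gamma (hα : 0 < α) (β x : ℝ) :
    Summable fun j : ℕ => x ^ j / Gamma (j * α + β) := by
  set ρ := (2 * |x| + 1) ^ α⁻¹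
  have hρ : 1 ≤ ρ := one_le_rpow (by linarith [abs_nonneg x]) (inv_nonneg.2 hα.le)
  have hρα : ρ ^ α = 2 * |x| + 1 := rpow_inv_rpow (by positivity) hα.ne'
  have hq : |x| / ρ ^ α < 1 := by rw [hρα, div_lt_one (by positivity)]; linarith [abs_nonneg x]
  refine Summable.of_norm_bounded_eventually
    ((summable_geometric_of_lt_one (by positivity) hq).mul_left (exp ρ * ρ ^ (2 - β))) ?_
  have hlarge : ∀ᶠ j : ℕ in atTop, 2 ≤ j * α + β :=
    tendsto_atTop.1 (tendsto_atTop_add_const_right _ β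
      (tendsto_natCast_atTop_atTop.atTop_mul_const hα)) 2
  rw [Nat.cofinite_eq_atTop]
  filter_upwards [hlarge] with j hj
  have hρ0 : 0 < ρ := by linarith
  rw [norm_div, norm_pow, norm_of_nonneg (Gamma_pos_of_pos (by linarith)).le, Real.norm_eq_abs]
  calc |x| ^ j / Gamma (j * α + β) ≤ |x| ^ j / (ρ ^ (j * α + β - 2) / exp ρ) := by
        gcongr
        rw [div_le_iff₀' (exp_pos ρ)]
        exact rpow_sub_two_le_exp_mul_Gamma hρ hj
    _ = exp ρ * ρ ^ (2 - β) * (|x| / ρ ^ α) ^ j := by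
        rw [div_pow, ← rpow_mul_natCast hρ0.le, show j * α + β - 2 = α * j - (2 - β) by ring,
          rpow_sub hρ0]
        field_simp

theorem mittagLefflerReal_apply_zero (α β : ℝ) : mittagLefflerReal α β 0 = (Gamma β)⁻¹ := by
  rw [mittagLefflerReal, tsum_eq_single 0 fun j hj => by simp [hj]]
  simp

theorem mittagLefflerReal_eq_inv_Gamma_add_mul (hα : 0 < α) (β x : ℝ) :
    mittagLefflerReal α β x = (Gamma β)⁻¹ + x * mittagLefflerReal α (α + β) x := by
  rw [mittagLefflerReal, (summable_pow_div_Gamma hα β x).tsum_eq_zero_add, mittagLefflerReal,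
    ← tsum_mul_left]
  congr 1
  · simp
  · refine tsum_congr fun j => ?_
    rw [pow_succ, show ((j + 1 : ℕ) : ℝ) * α + β = j * α + (α + β) by push_cast; ring]
    ring

/-- The constant term `(Γ 0)⁻¹` of the recurrence is `0`. -/
theorem mittagLefflerReal_zero_eq_mul (hα : 0 < α) (x : ℝ) :
    mittagLefflerReal α 0 x = x * mittagLefflerReal α α x := by
  simpa using mittagLefflerReal_eq_inv_Gamma_add_mul hα 0 x

theorem mittagLefflerReal_mul_rpow_eq_tsum (α β c : ℝ) {s : ℝ} (hs : 0 ≤ s) :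
    mittagLefflerReal α β (c * s ^ α) = ∑' j : ℕ, c ^ j * (s ^ (j * α) / Gamma (j * α + β)) := by
  refine tsum_congr fun j => ?_
  rw [mul_pow, ← rpow_mul_natCast hs, mul_comm α]
  ring

theorem abs_mittagLefflerReal_le (hα : 0 < α) {β : ℝ} (hβ : 0 < β) {x y : ℝ} (hxy : |x| ≤ y) :
    |mittagLefflerReal α β x| ≤ mittagLefflerReal α β y := by
  calc ‖mittagLefflerReal α β x‖ ≤ ∑' j : ℕ, ‖x ^ j / Gamma (j * α + β)‖ :=
        norm_tsum_le_tsum_norm (summable_pow_div_Gamma hα β x).norm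
    _ ≤ mittagLefflerReal α β y := by
        refine (summable_pow_div_Gamma hα β x).norm.tsum_le_tsum (fun j => ?_)
          (summable_pow_div_Gamma hα β y)
        have : 0 < Gamma (j * α + β) := Gamma_pos_of_pos (by positivity)
        rw [norm_div, norm_pow, norm_of_nonneg this.le, Real.norm_eq_abs]
        gcongr

theorem measurable_mittagLefflerReal (hα : 0 < α) (β : ℝ) :
    Measurable (mittagLefflerReal α β) :=
  measurable_of_tendsto_metrizable
    (f := fun n x => ∑ j ∈ Finset.range n, x ^ j / Gamma (j * α + β)) (fun n => by fun_prop)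
    (tendsto_pi_nhds.2 fun x => (summable_pow_div_Gamma hα β x).hasSum.tendsto_sum_nat)

/-- At `a = 0` both sides vanish: the function is constant and `Γ 0 = 0`. -/
theorem hasDerivAt_rpow_div_Gamma_add_one (a : ℝ) {t : ℝ} (ht : 0 < t) :
    HasDerivAt (fun s => s ^ a / Gamma (a + 1)) (t ^ (a - 1) / Gamma a) t := by
  rcases eq_or_ne a 0 with rfl | ha
  · simpa using hasDerivAt_const t (1 : ℝ)
  · rw [Gamma_add_one ha, ← mul_div_mul_left (t ^ (a - 1)) (Gamma a) ha]
    exact (hasDerivAt_rpow_const (Or.inl ht.ne')).div_const _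

theorem tsum_mul_rpow_sub_one_div_Gamma (hα : 0 < α) (c : ℝ) {t : ℝ} (ht : 0 < t) :
    ∑' j : ℕ, c ^ j * (t ^ (j * α - 1) / Gamma (j * α)) =
      c * t ^ (α - 1) * mittagLefflerReal α α (c * t ^ α) :=
  calc ∑' j : ℕ, c ^ j * (t ^ (j * α - 1) / Gamma (j * α))
      = t⁻¹ * mittagLefflerReal α 0 (c * t ^ α) := by
        rw [mittagLefflerReal_mul_rpow_eq_tsum α 0 c ht.le, ← tsum_mul_left]
        refine tsum_congr fun j => ?_
        rw [rpow_sub_one ht.ne', add_zero]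
        ring
    _ = c * t ^ (α - 1) * mittagLefflerReal α α (c * t ^ α) := by
        rw [mittagLefflerReal_zero_eq_mul hα, rpow_sub_one ht.ne']
        ring

theorem hasDerivAt_mittagLefflerReal_mul_rpow (hα : 0 < α) (c : ℝ) {t : ℝ} (ht : 0 < t) :
    HasDerivAt (fun s => mittagLefflerReal α 1 (c * s ^ α))
      (c * t ^ (α - 1) * mittagLefflerReal α α (c * t ^ α)) t := by
  have hT : t ∈ Ioo (t / 2) (2 * t) := ⟨by linarith, by linarith⟩
  have hbound (j : ℕ) (s : ℝ) (hs : s ∈ Ioo (t / 2) (2 * t)) :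
      ‖c ^ j * (s ^ (j * α - 1) / Gamma (j * α))‖ ≤
        2 / t * ‖(|c| * (2 * t) ^ α) ^ j / Gamma (j * α + 0)‖ := by
    have hs0 : 0 < s := by linarith [hs.1]
    have hpow : s ^ (j * α - 1) ≤ 2 / t * (2 * t) ^ (j * α) := by
      rw [rpow_sub_one hs0.ne', div_le_iff₀ hs0, mul_right_comm]
      calc s ^ (j * α) ≤ (2 * t) ^ (j * α) := by gcongr; exact hs.2.le
        _ ≤ 2 / t * s * (2 * t) ^ (j * α) := by
          refine le_mul_of_one_le_left (by positivity) ?_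
          rw [div_mul_eq_mul_div, one_le_div ht]; linarith [hs.1]
    rw [add_zero, mul_pow, ← rpow_mul_natCast (by positivity), mul_comm α]
    simp only [norm_mul, norm_div, norm_pow, Real.norm_eq_abs, abs_abs,
      abs_of_nonneg (rpow_nonneg hs0.le _),
      abs_of_nonneg (rpow_nonneg (by positivity : 0 ≤ 2 * t) _)]
    calc |c| ^ j * (s ^ (j * α - 1) / |Gamma (j * α)|)
        ≤ |c| ^ j * (2 / t * (2 * t) ^ (j * α) / |Gamma (j * α)|) := by gcongr
      _ = 2 / t * (|c| ^ j * (2 * t) ^ (j * α) / |Gamma (j * α)|) := by ring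
  have hseries : HasDerivAt (fun s => ∑' j : ℕ, c ^ j * (s ^ (j * α) / Gamma (j * α + 1)))
      (∑' j : ℕ, c ^ j * (t ^ (j * α - 1) / Gamma (j * α))) t := by
    refine hasDerivAt_tsum_of_isPreconnected
      ((summable_pow_div_Gamma hα 0 _).norm.mul_left _) isOpen_Ioo isPreconnected_Ioo
      (fun j s hs => (hasDerivAt_rpow_div_Gamma_add_one _ (by linarith [hs.1])).const_mul _)
      hbound hT ?_ hT
    simpa only [mul_pow, ← rpow_mul_natCast ht.le, mul_comm α, mul_div_assoc]
      using summable_pow_div_Gamma hα 1 (c * t ^ α)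
  rw [← tsum_mul_rpow_sub_one_div_Gamma hα c ht]
  refine hseries.congr_of_eventuallyEq ?_
  filter_upwards [eventually_gt_nhds ht] with s hs
  exact mittagLefflerReal_mul_rpow_eq_tsum α 1 c hs.le

theorem integral_sub_rpow_mul_rpow {a b t : ℝ} (ha : 0 < a) (hb : 0 < b) (ht : 0 < t) :
    ∫ s in (0)..t, (t - s) ^ (b - 1) * s ^ (a - 1) =
      Gamma a * Gamma b / Gamma (a + b) * t ^ (a + b - 1) := by
  have hC := Complex.betaIntegral_scaled a b ht
  rw [Complex.betaIntegral_eq_Gamma_mul_div _ _ (by simpa) (by simpa)] at hC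
  have hpt : EqOn (fun s : ℝ => (((t - s) ^ (b - 1) * s ^ (a - 1) : ℝ) : ℂ))
      (fun s : ℝ => (s : ℂ) ^ ((a : ℂ) - 1) * ((t : ℂ) - s) ^ ((b : ℂ) - 1)) (uIcc 0 t) := by
    intro s hs
    rw [uIcc_of_le ht.le] at hs
    push_cast [Complex.ofReal_cpow hs.1, Complex.ofReal_cpow (sub_nonneg.2 hs.2)]
    ring
  apply Complex.ofReal_injective
  rw [← intervalIntegral.integral_ofReal, intervalIntegral.integral_congr hpt, hC]
  push_cast [Complex.ofReal_cpow ht.le, ← Complex.Gamma_ofReal]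
  ring

theorem setIntegral_Ioo_sub_rpow_mul_rpow {a b t : ℝ} (ha : 0 < a) (hb : 0 < b) (ht : 0 < t) :
    ∫ s in Ioo 0 t, (t - s) ^ (b - 1) * s ^ (a - 1) =
      Gamma a * Gamma b / Gamma (a + b) * t ^ (a + b - 1) := by
  rw [← integral_Ioc_eq_integral_Ioo, ← intervalIntegral.integral_of_le ht.le,
    integral_sub_rpow_mul_rpow ha hb ht]

theorem integrableOn_Ioo_sub_rpow_mul_rpow {a b t : ℝ} (ha : 0 < a) (hb : 0 < b) (ht : 0 < t) :
    IntegrableOn (fun s => (t - s) ^ (b - 1) * s ^ (a - 1)) (Ioo 0 t) := by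
  -- the integral is positive, while non-integrable functions integrate to `0`
  refine (intervalIntegrable_iff_integrableOn_Ioo_of_le ht.le).1
    (intervalIntegral.intervalIntegrable_of_integral_ne_zero ?_)
  rw [integral_sub_rpow_mul_rpow ha hb ht]
  positivity

section RiemannLiouville

variable {β b t : ℝ}

theorem integrableOn_Ioo_sub_rpow_mul_mittagLefflerReal (hα : 0 < α) (hβ : 0 < β) (hb : 0 < b)
    (c : ℝ) (ht : 0 < t) :
    IntegrableOn (fun s => (t - s) ^ (b - 1) * (s ^ (β - 1) * mittagLefflerReal α β (c * s ^ α)))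
      (Ioo 0 t) := by
  have hE := measurable_mittagLefflerReal hα β
  refine ((integrableOn_Ioo_sub_rpow_mul_rpow hβ hb ht).const_mul
    (mittagLefflerReal α β (|c| * t ^ α))).mono' (by fun_prop) ?_
  refine (ae_restrict_iff' measurableSet_Ioo).2 (ae_of_all _ fun s hs => ?_)
  have hts : 0 ≤ t - s := sub_nonneg.2 hs.2.le
  have hEs : |mittagLefflerReal α β (c * s ^ α)| ≤ mittagLefflerReal α β (|c| * t ^ α) := by
    refine abs_mittagLefflerReal_le hα hβ ?_
    rw [abs_mul, abs_of_nonneg (rpow_nonneg hs.1.le _)]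
    gcongr
    exacts [hs.1.le, hs.2.le]
  rw [norm_mul, norm_mul, Real.norm_eq_abs, Real.norm_eq_abs, Real.norm_eq_abs,
    abs_of_nonneg (rpow_nonneg hts _), abs_of_nonneg (rpow_nonneg hs.1.le _)]
  calc (t - s) ^ (b - 1) * (s ^ (β - 1) * |mittagLefflerReal α β (c * s ^ α)|)
      ≤ (t - s) ^ (b - 1) * (s ^ (β - 1) * mittagLefflerReal α β (|c| * t ^ α)) := by
        have := rpow_nonneg hs.1.le (β - 1)
        gcongr
    _ = _ := by ring

theorem setIntegral_Ioo_sub_rpow_mul_mittagLefflerReal (hα : 0 < α) (hβ : 0 < β) (hb : 0 < b)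
    (c : ℝ) (ht : 0 < t) :
    ∫ s in Ioo 0 t, (t - s) ^ (b - 1) * (s ^ (β - 1) * mittagLefflerReal α β (c * s ^ α)) =
      Gamma b * t ^ (β + b - 1) * mittagLefflerReal α (β + b) (c * t ^ α) := by
  have ha (j : ℕ) : 0 < j * α + β := by positivity
  set F : ℕ → ℝ → ℝ := fun j s =>
    c ^ j / Gamma (j * α + β) * ((t - s) ^ (b - 1) * s ^ (j * α + β - 1))
  have hF : EqOn (fun s => (t - s) ^ (b - 1) * (s ^ (β - 1) * mittagLefflerReal α β (c * s ^ α)))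
      (fun s => ∑' j, F j s) (Ioo 0 t) := by
    intro s hs
    dsimp only
    rw [mittagLefflerReal_mul_rpow_eq_tsum α β c hs.1.le, ← tsum_mul_left, ← tsum_mul_left]
    refine tsum_congr fun j => ?_
    simp only [F]
    rw [show j * α + β - 1 = j * α + (β - 1) by ring, rpow_add hs.1]
    ring
  have hFint (d : ℝ) (j : ℕ) :
      ∫ s in Ioo 0 t, d ^ j / Gamma (j * α + β) * ((t - s) ^ (b - 1) * s ^ (j * α + β - 1)) =
        Gamma b * t ^ (β + b - 1) * ((d * t ^ α) ^ j / Gamma (j * α + (β + b))) := by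
    rw [integral_const_mul, setIntegral_Ioo_sub_rpow_mul_rpow (ha j) hb ht, mul_pow,
      ← rpow_mul_natCast ht.le, show j * α + β + b - 1 = α * j + (β + b - 1) by ring,
      rpow_add ht, show j * α + β + b = j * α + (β + b) by ring]
    have := (Gamma_pos_of_pos (ha j)).ne'
    field_simp
  have hFnorm (j : ℕ) : ∫ s in Ioo 0 t, ‖F j s‖ =
      Gamma b * t ^ (β + b - 1) * ((|c| * t ^ α) ^ j / Gamma (j * α + (β + b))) := by
    rw [← hFint]
    refine setIntegral_congr_fun measurableSet_Ioo fun s hs => ?_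
    simp only [F, norm_mul, norm_div, norm_pow, Real.norm_eq_abs,
      abs_of_pos (Gamma_pos_of_pos (ha j)), abs_of_nonneg (rpow_nonneg (sub_nonneg.2 hs.2.le) _),
      abs_of_nonneg (rpow_nonneg hs.1.le _)]
  have hsum : Summable fun j => ∫ s in Ioo 0 t, ‖F j s‖ := by
    simpa only [hFnorm] using (summable_pow_div_Gamma hα (β + b) _).mul_left _
  rw [setIntegral_congr_fun measurableSet_Ioo hF, ← integral_tsum_of_summable_integral_norm
    (fun j => (integrableOn_Ioo_sub_rpow_mul_rpow (ha j) hb ht).const_mul _) hsum,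
    mittagLefflerReal, ← tsum_mul_left]
  exact tsum_congr (hFint c)

end RiemannLiouville

theorem mittagLeffler_caputo_eigen_general (α μ : ℝ) (hα0 : 0 < α) (hα1 : α < 1)
    (y : ℝ → ℝ) (hy : ∀ t : ℝ, y t = mittagLefflerReal α 1 (-μ * t ^ α)) :
    y 0 = 1 ∧
    (∀ t ∈ Set.Ioi (0 : ℝ), DifferentiableAt ℝ y t) ∧
    (∀ t : ℝ, 0 < t →
      IntegrableOn (fun s : ℝ => (t - s) ^ (-α) * deriv y s) (Set.Ioo 0 t) ∧
      (1 / Real.Gamma (1 - α)) * ∫ s in Set.Ioo (0 : ℝ) t, (t - s) ^ (-α) * deriv y s =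
        -μ * mittagLefflerReal α 1 (-μ * t ^ α)) := by
  have hderiv (s : ℝ) (hs : 0 < s) :
      HasDerivAt y (-μ * s ^ (α - 1) * mittagLefflerReal α α (-μ * s ^ α)) s := by
    rw [funext hy]
    exact hasDerivAt_mittagLefflerReal_mul_rpow hα0 (-μ) hs
  refine ⟨by simp [hy, zero_rpow hα0.ne', mittagLefflerReal_apply_zero],
    fun t ht => (hderiv t ht).differentiableAt, fun t ht => ?_⟩
  have hkernel : EqOn (fun s => (t - s) ^ (-α) * deriv y s)
      (fun s => -μ * ((t - s) ^ ((1 - α) - 1) *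
        (s ^ (α - 1) * mittagLefflerReal α α (-μ * s ^ α)))) (Ioo 0 t) := fun s hs => by
    simp only [(hderiv s hs.1).deriv, sub_sub_cancel_left]
    ring
  have h1α : 0 < 1 - α := sub_pos.2 hα1
  refine ⟨IntegrableOn.congr_fun
    ((integrableOn_Ioo_sub_rpow_mul_mittagLefflerReal hα0 hα0 h1α (-μ) ht).const_mul (-μ))
      hkernel.symm measurableSet_Ioo, ?_⟩
  rw [setIntegral_congr_fun measurableSet_Ioo hkernel, integral_const_mul,
    setIntegral_Ioo_sub_rpow_mul_mittagLefflerReal hα0 hα0 h1α (-μ) ht,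
    add_sub_cancel, sub_self, rpow_zero]
  have := (Gamma_pos_of_pos h1α).ne'
  field_simp

/-- For `α ∈ (0,1)` and `μ ≥ 0`, the function `y(t) = E_{α,1}(−μ t^α)` satisfies `y(0) = 1`,
is differentiable on `(0,∞)`, the Caputo kernel `s ↦ (t−s)^{−α} y′(s)` is integrable on
`(0,t)` for each `t > 0`, and the Caputo fractional derivative satisfies
`∂_t^α y(t) = (1/Γ(1−α)) ∫_0^t (t−s)^{−α} y′(s) ds = −μ E_{α,1}(−μ t^α)`. -/
theorem mittagLeffler_caputo_eigen (α μ : ℝ) (hα0 : 0 < α) (hα1 : α < 1) (hμ : 0 ≤ μ)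
    (y : ℝ → ℝ) (hy : ∀ t : ℝ, y t = mittagLefflerReal α 1 (-μ * t ^ α)) :
    y 0 = 1 ∧
    (∀ t ∈ Set.Ioi (0 : ℝ), DifferentiableAt ℝ y t) ∧
    (∀ t : ℝ, 0 < t →
      IntegrableOn (fun s : ℝ => (t - s) ^ (-α) * deriv y s) (Set.Ioo 0 t) ∧
      (1 / Real.Gamma (1 - α)) * ∫ s in Set.Ioo (0 : ℝ) t, (t - s) ^ (-α) * deriv y s =
        -μ * mittagLefflerReal α 1 (-μ * t ^ α)) :=
  mittagLeffler_caputo_eigen_general α μ hα0 hα1 y hy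
end

section
/- Let α ∈ (0,1), T > 0, and let v : [0,T] → ℝ be continuously differentiable; set v₁(s) = s v(s), so v₁′(s) = v(s) + s v′(s). Then for every t ∈ (0,T] one has t (I^α v′)(t) = (I^α v₁′)(t) + (α−1) (I^α v)(t) − t κ_α(t) v(0), where κ_α(t) = t^{α−1}/Γ(α). -/
open Real MeasureTheory

/-- The Riemann–Liouville fractional integral
`(I^β v)(t) = ∫_0^t (t−s)^{β−1}/Γ(β) · v(s) ds`. -/
noncomputable def fracInt (β : ℝ) (v : ℝ → ℝ) (t : ℝ) : ℝ :=
  ∫ s in Set.Ioo (0 : ℝ) t, (t - s) ^ (β - 1) / Real.Gamma β * v s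

/-!
Split the kernel as `t (t - s)^{α-1} = (t - s)^α + s (t - s)^{α-1}`. The second part gives
`I^α (s v')`, and integrating the first part by parts moves the derivative onto the now
continuous kernel `(t - s)^α`, producing `α I^α v` and the boundary term `-t^α v(0)/Γ(α)`;
finally `I^α v + I^α (s v') = I^α v₁'`.
-/

open Set

lemma fracInt_eq_intervalIntegral (β : ℝ) (w : ℝ → ℝ) {t : ℝ} (ht : 0 ≤ t) :
    fracInt β w t = (Gamma β)⁻¹ * ∫ s in (0 : ℝ)..t, (t - s) ^ (β - 1) * w s := by
  rw [fracInt, ← intervalIntegral.integral_const_mul, intervalIntegral.integral_of_le ht,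
    integral_Ioc_eq_integral_Ioo]
  congr 1 with s
  ring

lemma intervalIntegrable_sub_rpow {r : ℝ} (hr : -1 < r) (t a b : ℝ) :
    IntervalIntegrable (fun s => (t - s) ^ r) volume a b := by
  simpa using
    (intervalIntegral.intervalIntegrable_rpow' hr (a := t - a) (b := t - b)).comp_sub_left t

lemma continuous_sub_rpow {r : ℝ} (hr : 0 ≤ r) (t : ℝ) : Continuous fun s : ℝ => (t - s) ^ r :=
  (continuous_const.sub continuous_id).rpow_const fun _ => Or.inr hr

lemma mul_sub_rpow_sub_one {α : ℝ} (hα : α ≠ 0) {s t : ℝ} (hst : s ≤ t) :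
    t * (t - s) ^ (α - 1) = (t - s) ^ α + s * (t - s) ^ (α - 1) := by
  have h := rpow_add_one' (sub_nonneg.2 hst) (by simpa using hα : α - 1 + 1 ≠ 0)
  rw [sub_add_cancel] at h
  rw [h]
  ring

lemma integral_sub_rpow_mul_deriv {α t : ℝ} (hα : 0 < α) (ht : 0 ≤ t) {v v' : ℝ → ℝ}
    (hv : ∀ s ∈ Icc 0 t, HasDerivAt v (v' s) s) (hv' : ContinuousOn v' (Icc 0 t)) :
    ∫ s in (0 : ℝ)..t, (t - s) ^ α * v' s
      = α * (∫ s in (0 : ℝ)..t, (t - s) ^ (α - 1) * v s) - t ^ α * v 0 := by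
  rw [← uIcc_of_le ht] at hv hv'
  have hu : ∀ s ∈ Ioo (min 0 t) (max 0 t),
      HasDerivAt (fun x => (t - x) ^ α) (-α * (t - s) ^ (α - 1)) s := by
    intro s hs
    have hts : t - s ≠ 0 := sub_ne_zero.2 (ne_of_gt (by simpa [ht] using hs.2))
    exact (((hasDerivAt_id' s).const_sub t).rpow_const (Or.inl hts)).congr_deriv (by ring)
  rw [intervalIntegral.integral_mul_deriv_eq_deriv_mul_of_hasDerivAt
    (continuous_sub_rpow hα.le t).continuousOn
    (fun s hs => (hv s hs).continuousAt.continuousWithinAt) hu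
    (fun s hs => hv s (Ioo_subset_Icc_self hs))
    ((intervalIntegrable_sub_rpow (by linarith) t 0 t).const_mul (-α)) hv'.intervalIntegrable]
  simp only [sub_self, sub_zero, zero_rpow hα.ne', zero_mul, mul_assoc,
    intervalIntegral.integral_const_mul]
  ring

lemma mul_integral_sub_rpow_mul_deriv {α t : ℝ} (hα : 0 < α) (ht : 0 ≤ t) {v v' : ℝ → ℝ}
    (hv : ∀ s ∈ Icc 0 t, HasDerivAt v (v' s) s) (hv' : ContinuousOn v' (Icc 0 t)) :
    t * ∫ s in (0 : ℝ)..t, (t - s) ^ (α - 1) * v' s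
      = (∫ s in (0 : ℝ)..t, (t - s) ^ (α - 1) * (v s + s * v' s))
        + (α - 1) * (∫ s in (0 : ℝ)..t, (t - s) ^ (α - 1) * v s) - t ^ α * v 0 := by
  have hκ := intervalIntegrable_sub_rpow (r := α - 1) (by linarith) t 0 t
  have hv'u : ContinuousOn v' (uIcc 0 t) := uIcc_of_le ht ▸ hv'
  have hvu : ContinuousOn v (uIcc 0 t) :=
    uIcc_of_le ht ▸ fun s hs => (hv s hs).continuousAt.continuousWithinAt
  have hIv : IntervalIntegrable (fun s => (t - s) ^ (α - 1) * v s) volume 0 t :=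
    hκ.mul_continuousOn hvu
  have hIsv' : IntervalIntegrable (fun s => (t - s) ^ (α - 1) * (s * v' s)) volume 0 t :=
    hκ.mul_continuousOn (continuousOn_id.mul hv'u)
  have hkernel : t * ∫ s in (0 : ℝ)..t, (t - s) ^ (α - 1) * v' s
      = (∫ s in (0 : ℝ)..t, (t - s) ^ α * v' s)
        + ∫ s in (0 : ℝ)..t, (t - s) ^ (α - 1) * (s * v' s) := by
    rw [← intervalIntegral.integral_const_mul, ← intervalIntegral.integral_add _ hIsv']
    · refine intervalIntegral.integral_congr fun s hs => ?_
      rw [uIcc_of_le ht] at hs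
      linear_combination v' s * mul_sub_rpow_sub_one hα.ne' hs.2
    · exact ((continuous_sub_rpow hα.le t).continuousOn.mul hv'u).intervalIntegrable
  have hsum : ∫ s in (0 : ℝ)..t, (t - s) ^ (α - 1) * (v s + s * v' s)
      = (∫ s in (0 : ℝ)..t, (t - s) ^ (α - 1) * v s)
        + ∫ s in (0 : ℝ)..t, (t - s) ^ (α - 1) * (s * v' s) := by
    simp only [mul_add]
    exact intervalIntegral.integral_add hIv hIsv'
  rw [hkernel, hsum, integral_sub_rpow_mul_deriv hα ht hv hv']
  ring

theorem fracInt_mul_deriv_general (α T : ℝ) (hα0 : 0 < α)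
    (v v' : ℝ → ℝ) (hderiv : ∀ s ∈ Set.Icc (0 : ℝ) T, HasDerivAt v (v' s) s)
    (hv' : ContinuousOn v' (Set.Icc 0 T)) :
    ∀ t ∈ Set.Ioc (0 : ℝ) T,
      t * fracInt α v' t =
        fracInt α (fun s => v s + s * v' s) t + (α - 1) * fracInt α v t
          - t * (t ^ (α - 1) / Real.Gamma α) * v 0 := by
  rintro t ⟨ht0, htT⟩
  have hsub : Icc 0 t ⊆ Icc 0 T := Icc_subset_Icc_right htT
  have h := mul_integral_sub_rpow_mul_deriv hα0 ht0.le (fun s hs => hderiv s (hsub hs))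
    (hv'.mono hsub)
  have htα : t ^ α = t * t ^ (α - 1) := by
    rw [mul_comm, ← rpow_add_one' ht0.le (by simpa using hα0.ne'), sub_add_cancel]
  simp only [fracInt_eq_intervalIntegral _ _ ht0.le]
  rw [htα] at h
  linear_combination (Gamma α)⁻¹ * h

/-- For `α ∈ (0,1)` and `v` continuously differentiable on `[0,T]` (with derivative `v'`),
setting `v₁(s) = s v(s)` so that `v₁′(s) = v(s) + s v′(s)`, one has for all `t ∈ (0,T]`:
`t (I^α v′)(t) = (I^α v₁′)(t) + (α−1)(I^α v)(t) − t·(t^{α−1}/Γ(α))·v(0)`. -/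
theorem fracInt_mul_deriv (α T : ℝ) (hα0 : 0 < α) (hα1 : α < 1) (hT : 0 < T)
    (v v' : ℝ → ℝ) (hderiv : ∀ s ∈ Set.Icc (0 : ℝ) T, HasDerivAt v (v' s) s)
    (hv' : ContinuousOn v' (Set.Icc 0 T)) :
    ∀ t ∈ Set.Ioc (0 : ℝ) T,
      t * fracInt α v' t =
        fracInt α (fun s => v s + s * v' s) t + (α - 1) * fracInt α v t
          - t * (t ^ (α - 1) / Real.Gamma α) * v 0 :=
  fracInt_mul_deriv_general α T hα0 v v' hderiv hv'
end

section
/- For every α ∈ (0,1) there exists a constant C > 0 (depending only on α) such that for every real Hilbert space H, every T > 0, every continuously differentiable function v : [0,T] → H, and every t ∈ (0,T], one has ‖v(t) − v(0)‖² ≤ C t^α ∫_0^t ‖(I^{(1−α)/2} v′)(s)‖² ds. -/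
open Real MeasureTheory

/-- The Riemann–Liouville fractional integral of an `H`-valued function,
`(I^β v)(t) = ∫_0^t (t−s)^{β−1}/Γ(β) • v(s) ds` (a Bochner integral). -/
noncomputable def fracIntH (H : Type) [NormedAddCommGroup H] [NormedSpace ℝ H]
    (β : ℝ) (v : ℝ → H) (t : ℝ) : H :=
  ∫ s in Set.Ioo (0 : ℝ) t, ((t - s) ^ (β - 1) / Real.Gamma β) • v s

/-! With `β = (1 - α) / 2` and `γ = (1 + α) / 2` we have `β + γ = 1`, so the semigroup
law `I^γ (I^β f) = I^(β + γ) f` (Fubini and a Beta integral) and the fundamental theorem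
of calculus give `v t - v 0 = I^γ (I^β v') t`. Since `γ > 1/2`, the kernel `κ_γ (t - ·)`
is square integrable on `(0, t)`, with
`∫ κ_γ (t - s)² ds = t^(2γ - 1) / ((2γ - 1) Γ(γ)²) = t^α / (α Γ(γ)²)`, and Cauchy–Schwarz
bounds `‖I^γ w t‖²` by this quantity times `∫_0^t ‖w‖²`. -/

open Set

lemma integral_rpow_mul_rpow_sub {p q c : ℝ} (hp : 0 < p) (hq : 0 < q) (hc : 0 < c) :
    ∫ x in (0)..c, x ^ (p - 1) * (c - x) ^ (q - 1) =
      c ^ (p + q - 1) * (Gamma p * Gamma q / Gamma (p + q)) := by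
  have hcomplex : ((∫ x in (0)..c, x ^ (p - 1) * (c - x) ^ (q - 1) : ℝ) : ℂ) =
      ∫ x in (0 : ℝ)..c, (x : ℂ) ^ ((p : ℂ) - 1) * ((c : ℂ) - x) ^ ((q : ℂ) - 1) := by
    rw [← intervalIntegral.integral_ofReal]
    refine intervalIntegral.integral_congr fun x hx => ?_
    rw [uIcc_of_le hc.le] at hx
    push_cast [Complex.ofReal_cpow hx.1, Complex.ofReal_cpow (sub_nonneg.2 hx.2)]
    rfl
  have hbeta : Complex.betaIntegral p q = ((Gamma p * Gamma q / Gamma (p + q) : ℝ) : ℂ) := by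
    have hΓ : Complex.Gamma (p + q) ≠ 0 := by
      rw [← Complex.ofReal_add, Complex.Gamma_ofReal]
      exact_mod_cast (Gamma_pos_of_pos (add_pos hp hq)).ne'
    rw [Complex.ofReal_div, Complex.ofReal_mul, ← Complex.Gamma_ofReal, ← Complex.Gamma_ofReal,
      ← Complex.Gamma_ofReal, Complex.ofReal_add, eq_div_iff hΓ,
      Complex.Gamma_mul_Gamma_eq_betaIntegral (by simpa using hp) (by simpa using hq), mul_comm]
  apply Complex.ofReal_injective
  rw [hcomplex, Complex.betaIntegral_scaled _ _ hc, hbeta]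
  push_cast [Complex.ofReal_cpow hc.le]
  rfl

/-- `κ_δ` extended by zero, so that `fracIntH H δ f s` is an integral over `(0, t)` for every
`s ≤ t`. -/
noncomputable def rlKernel (δ x : ℝ) : ℝ :=
  if 0 < x then x ^ (δ - 1) / Gamma δ else 0

section Kernel

variable {β γ δ : ℝ}

lemma rlKernel_of_pos {x : ℝ} (hx : 0 < x) : rlKernel δ x = x ^ (δ - 1) / Gamma δ := if_pos hx

lemma rlKernel_of_nonpos {x : ℝ} (hx : x ≤ 0) : rlKernel δ x = 0 := if_neg hx.not_gt

lemma rlKernel_nonneg (hδ : 0 < δ) (x : ℝ) : 0 ≤ rlKernel δ x := by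
  unfold rlKernel
  split_ifs with hx
  · exact div_nonneg (rpow_nonneg hx.le _) (Gamma_pos_of_pos hδ).le
  · exact le_rfl

lemma measurable_rlKernel (δ : ℝ) : Measurable (rlKernel δ) :=
  Measurable.ite measurableSet_Ioi ((measurable_id.pow_const _).div_const _) measurable_const

lemma integrableOn_rlKernel_sub (hδ : 0 < δ) (s : ℝ) :
    IntegrableOn (fun r => rlKernel δ (s - r)) (Ioi 0) := by
  have hIoo : IntegrableOn (fun r => rlKernel δ (s - r)) (Ioo 0 s) := by
    rcases le_or_gt s 0 with hs | hs
    · simp [Ioo_eq_empty_of_le hs]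
    have h := ((intervalIntegral.intervalIntegrable_rpow' (r := δ - 1) (by linarith)
      (a := 0) (b := s)).comp_sub_left s).div_const (Gamma δ) |>.symm
    rw [sub_self, sub_zero] at h
    rw [intervalIntegrable_iff_integrableOn_Ioo_of_le hs.le] at h
    exact h.congr_fun (fun r hr => (rlKernel_of_pos (sub_pos.2 hr.2)).symm) measurableSet_Ioo
  have hIci : IntegrableOn (fun r => rlKernel δ (s - r)) (Ici s) :=
    integrableOn_zero.congr_fun (fun r hr => (rlKernel_of_nonpos (sub_nonpos.2 hr)).symm)
      measurableSet_Ici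
  refine (hIoo.union hIci).mono_set fun r (hr : 0 < r) => ?_
  rcases lt_or_ge r s with hrs | hsr
  · exact Or.inl ⟨hr, hrs⟩
  · exact Or.inr hsr

lemma integral_rlKernel_sub (hδ : 0 < δ) {s : ℝ} (hs : 0 ≤ s) :
    ∫ r in Ioo 0 s, rlKernel δ (s - r) = s ^ δ / Gamma (δ + 1) := by
  rw [← integral_Ioc_eq_integral_Ioo, ← intervalIntegral.integral_of_le hs,
    intervalIntegral.integral_comp_sub_left (fun x => rlKernel δ x) s, sub_self, sub_zero,
    intervalIntegral.integral_of_le hs, integral_Ioc_eq_integral_Ioo,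
    setIntegral_congr_fun measurableSet_Ioo (fun x hx => rlKernel_of_pos hx.1),
    ← integral_Ioc_eq_integral_Ioo, ← intervalIntegral.integral_of_le hs,
    intervalIntegral.integral_div, integral_rpow (Or.inl (by linarith)), sub_add_cancel,
    zero_rpow hδ.ne', sub_zero, Gamma_add_one hδ.ne', div_div]

lemma rlKernel_sq (hγ : 1 / 2 < γ) (x : ℝ) :
    rlKernel γ x ^ 2 = Gamma (2 * γ - 1) / Gamma γ ^ 2 * rlKernel (2 * γ - 1) x := by
  rcases le_or_gt x 0 with hx | hx
  · rw [rlKernel_of_nonpos (δ := γ) hx, rlKernel_of_nonpos hx]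
    ring
  have hΓ : Gamma (2 * γ - 1) ≠ 0 := (Gamma_pos_of_pos (by linarith)).ne'
  rw [rlKernel_of_pos hx, rlKernel_of_pos hx, div_pow, sq, ← rpow_add hx,
    show γ - 1 + (γ - 1) = 2 * γ - 1 - 1 by ring]
  field_simp

lemma memLp_two_rlKernel_sub (hγ : 1 / 2 < γ) (s : ℝ) :
    MemLp (fun r => rlKernel γ (s - r)) 2 (volume.restrict (Ioi 0)) := by
  have hmeas : Measurable fun r => rlKernel γ (s - r) :=
    (measurable_rlKernel γ).comp (measurable_const.sub measurable_id)
  refine (memLp_two_iff_integrable_sq hmeas.aestronglyMeasurable).2 ?_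
  simp only [rlKernel_sq hγ]
  exact (integrableOn_rlKernel_sub (by linarith) s).const_mul _

lemma integral_sq_rlKernel_sub (hγ : 1 / 2 < γ) {s : ℝ} (hs : 0 ≤ s) :
    ∫ r in Ioo 0 s, rlKernel γ (s - r) ^ 2 =
      Gamma (2 * γ - 1) / Gamma γ ^ 2 * (s ^ (2 * γ - 1) / Gamma (2 * γ)) := by
  simp_rw [rlKernel_sq hγ]
  rw [integral_const_mul, integral_rlKernel_sub (by linarith) hs, sub_add_cancel]

lemma integral_rlKernel_mul_rlKernel (hβ : 0 < β) (hγ : 0 < γ) (t r : ℝ) :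
    ∫ s, rlKernel γ (t - s) * rlKernel β (s - r) = rlKernel (β + γ) (t - r) := by
  have hzero : ∀ s ∉ Ioo r t, rlKernel γ (t - s) * rlKernel β (s - r) = 0 := fun s hs => by
    rcases le_or_gt s r with hsr | hrs
    · rw [rlKernel_of_nonpos (sub_nonpos.2 hsr), mul_zero]
    · rw [rlKernel_of_nonpos (sub_nonpos.2 (not_lt.1 fun hst => hs ⟨hrs, hst⟩)), zero_mul]
  rcases le_or_gt t r with htr | hrt
  · rw [rlKernel_of_nonpos (sub_nonpos.2 htr),
      ← setIntegral_eq_integral_of_forall_compl_eq_zero hzero, Ioo_eq_empty_of_le htr,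
      Measure.restrict_empty, integral_zero_measure]
  set f : ℝ → ℝ := fun x => x ^ (β - 1) * (t - r - x) ^ (γ - 1) / (Gamma β * Gamma γ)
  have hcongr : EqOn (fun s => rlKernel γ (t - s) * rlKernel β (s - r)) (fun s => f (s - r))
      (Ioo r t) := fun s hs => by
    simp only [f, rlKernel_of_pos (sub_pos.2 hs.1), rlKernel_of_pos (sub_pos.2 hs.2),
      show t - r - (s - r) = t - s by ring]
    ring
  rw [← setIntegral_eq_integral_of_forall_compl_eq_zero hzero,
    setIntegral_congr_fun measurableSet_Ioo hcongr, ← integral_Ioc_eq_integral_Ioo,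
    ← intervalIntegral.integral_of_le hrt.le, intervalIntegral.integral_comp_sub_right f r,
    sub_self, intervalIntegral.integral_div,
    integral_rpow_mul_rpow_sub hβ hγ (sub_pos.2 hrt), rlKernel_of_pos (sub_pos.2 hrt)]
  have hΓβ := (Gamma_pos_of_pos hβ).ne'
  have hΓγ := (Gamma_pos_of_pos hγ).ne'
  have hΓ := (Gamma_pos_of_pos (add_pos hβ hγ)).ne'
  field_simp

end Kernel

lemma sq_norm_integral_smul_le {X E : Type*} [MeasurableSpace X] {μ : Measure X}
    [NormedAddCommGroup E] [NormedSpace ℝ E] {g : X → ℝ} {w : X → E}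
    (hg : MemLp g 2 μ) (hw : MemLp w 2 μ) :
    ‖∫ x, g x • w x ∂μ‖ ^ 2 ≤ (∫ x, g x ^ 2 ∂μ) * ∫ x, ‖w x‖ ^ 2 ∂μ := by
  have hHolder := integral_mul_le_Lp_mul_Lq_of_nonneg Real.HolderConjugate.two_two
    (f := fun x => ‖g x‖) (g := fun x => ‖w x‖)
    (ae_of_all _ fun x => norm_nonneg (g x)) (ae_of_all _ fun x => norm_nonneg (w x))
    (by simpa using hg.norm) (by simpa using hw.norm)
  simp only [rpow_two, norm_eq_abs, sq_abs, ← sqrt_eq_rpow] at hHolder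
  have hle : ‖∫ x, g x • w x ∂μ‖ ≤ ∫ x, |g x| * ‖w x‖ ∂μ := by
    simpa only [norm_smul, norm_eq_abs] using norm_integral_le_integral_norm (fun x => g x • w x)
  calc ‖∫ x, g x • w x ∂μ‖ ^ 2
      ≤ (√(∫ x, g x ^ 2 ∂μ) * √(∫ x, ‖w x‖ ^ 2 ∂μ)) ^ 2 :=
        pow_le_pow_left₀ (norm_nonneg _) (hle.trans hHolder) 2
    _ = (∫ x, g x ^ 2 ∂μ) * ∫ x, ‖w x‖ ^ 2 ∂μ := by
        rw [mul_pow, sq_sqrt (integral_nonneg fun x => sq_nonneg _),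
          sq_sqrt (integral_nonneg fun x => sq_nonneg _)]

section FracInt

variable {H : Type} [NormedAddCommGroup H] [NormedSpace ℝ H] {β γ : ℝ}

lemma fracIntH_eq_setIntegral_rlKernel (β : ℝ) (f : ℝ → H) {s t : ℝ} (hst : s ≤ t) :
    fracIntH H β f s = ∫ r in Ioo 0 t, rlKernel β (s - r) • f r := by
  rw [setIntegral_eq_of_subset_of_forall_sdiff_eq_zero measurableSet_Ioo
    (Ioo_subset_Ioo_right hst) fun r hr => ?_]
  · exact setIntegral_congr_fun measurableSet_Ioo fun r hr => by
      rw [rlKernel_of_pos (sub_pos.2 hr.2)]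
  · rw [rlKernel_of_nonpos (sub_nonpos.2 (not_lt.1 fun hrs => hr.2 ⟨hr.1.1, hrs⟩)), zero_smul]

lemma fracIntH_one (f : ℝ → H) (t : ℝ) : fracIntH H 1 f t = ∫ s in Ioo 0 t, f s := by
  simp [fracIntH]

lemma norm_fracIntH_le (hβ : 0 < β) {f : ℝ → H} {M s : ℝ} (hs : 0 ≤ s)
    (hf : ∀ r ∈ Ioo 0 s, ‖f r‖ ≤ M) :
    ‖fracIntH H β f s‖ ≤ M * s ^ β / Gamma (β + 1) := by
  rw [fracIntH_eq_setIntegral_rlKernel β f le_rfl, mul_div_assoc,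
    ← integral_rlKernel_sub hβ hs, ← integral_const_mul]
  refine norm_integral_le_of_norm_le
    (((integrableOn_rlKernel_sub hβ s).mono_set Ioo_subset_Ioi_self).const_mul M) ?_
  filter_upwards [ae_restrict_mem measurableSet_Ioo] with r hr
  rw [norm_smul, norm_of_nonneg (rlKernel_nonneg hβ _), mul_comm]
  exact mul_le_mul_of_nonneg_right (hf r hr) (rlKernel_nonneg hβ _)

lemma norm_fracIntH_le_of_mem_Ioo (hβ : 0 < β) {f : ℝ → H} {M s t : ℝ} (hs : s ∈ Ioo 0 t)
    (hf : ∀ r ∈ Ioo 0 t, ‖f r‖ ≤ M) :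
    ‖fracIntH H β f s‖ ≤ M * t ^ β / Gamma (β + 1) := by
  have hM : 0 ≤ M := (norm_nonneg _).trans (hf s hs)
  have hΓ := Gamma_pos_of_pos (show 0 < β + 1 by linarith)
  calc ‖fracIntH H β f s‖ ≤ M * s ^ β / Gamma (β + 1) :=
        norm_fracIntH_le hβ hs.1.le fun r hr => hf r ⟨hr.1, hr.2.trans hs.2⟩
    _ ≤ M * t ^ β / Gamma (β + 1) := by
        gcongr
        exacts [hs.1.le, hs.2.le]

lemma aestronglyMeasurable_fracIntH (β : ℝ) {f : ℝ → H} {t : ℝ}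
    (hf : AEStronglyMeasurable f (volume.restrict (Ioo 0 t))) :
    AEStronglyMeasurable (fracIntH H β f) (volume.restrict (Ioo 0 t)) := by
  have hG : AEStronglyMeasurable (fun p : ℝ × ℝ => rlKernel β (p.1 - p.2) • f p.2)
      ((volume.restrict (Ioo 0 t)).prod (volume.restrict (Ioo 0 t))) :=
    ((measurable_rlKernel β).comp (measurable_fst.sub measurable_snd)).aestronglyMeasurable.smul
      hf.comp_snd
  refine hG.integral_prod_right'.congr ?_
  filter_upwards [ae_restrict_mem measurableSet_Ioo] with s hs
  exact (fracIntH_eq_setIntegral_rlKernel β f hs.2.le).symm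

variable {f : ℝ → H} {t M : ℝ}

lemma memLp_fracIntH (hβ : 0 < β) (p : ENNReal)
    (hfm : AEStronglyMeasurable f (volume.restrict (Ioo 0 t)))
    (hfM : ∀ r ∈ Ioo 0 t, ‖f r‖ ≤ M) :
    MemLp (fracIntH H β f) p (volume.restrict (Ioo 0 t)) :=
  MemLp.of_bound (aestronglyMeasurable_fracIntH β hfm) _
    ((ae_restrict_mem measurableSet_Ioo).mono fun _ hs => norm_fracIntH_le_of_mem_Ioo hβ hs hfM)

lemma sq_norm_fracIntH_le (hγ : 1 / 2 < γ) (ht : 0 ≤ t)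
    (hf : MemLp f 2 (volume.restrict (Ioo 0 t))) :
    ‖fracIntH H γ f t‖ ^ 2 ≤
      Gamma (2 * γ - 1) / Gamma γ ^ 2 * (t ^ (2 * γ - 1) / Gamma (2 * γ)) *
        ∫ s in Ioo 0 t, ‖f s‖ ^ 2 := by
  rw [fracIntH_eq_setIntegral_rlKernel γ f le_rfl, ← integral_sq_rlKernel_sub hγ ht]
  exact sq_norm_integral_smul_le
    ((memLp_two_rlKernel_sub hγ t).mono_measure (Measure.restrict_mono Ioo_subset_Ioi_self le_rfl))
    hf

lemma fracIntH_one_eq_sub {v v' : ℝ → H} [CompleteSpace H] (ht : 0 ≤ t)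
    (hv : ∀ s ∈ Icc 0 t, HasDerivAt v (v' s) s) (hv' : ContinuousOn v' (Icc 0 t)) :
    fracIntH H 1 v' t = v t - v 0 := by
  rw [fracIntH_one, ← integral_Ioc_eq_integral_Ioo, ← intervalIntegral.integral_of_le ht]
  exact intervalIntegral.integral_eq_sub_of_hasDerivAt (fun s hs => hv s (uIcc_of_le ht ▸ hs))
    (hv'.intervalIntegrable_of_Icc ht)

lemma integrable_rlKernel_mul_rlKernel_smul (hβ : 0 < β) (hγ : 0 < γ)
    (hfm : AEStronglyMeasurable f (volume.restrict (Ioo 0 t)))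
    (hfM : ∀ r ∈ Ioo 0 t, ‖f r‖ ≤ M) :
    Integrable (fun p : ℝ × ℝ => (rlKernel γ (t - p.1) * rlKernel β (p.1 - p.2)) • f p.2)
      ((volume.restrict (Ioo 0 t)).prod (volume.restrict (Ioo 0 t))) := by
  have hFm : AEStronglyMeasurable
      (fun p : ℝ × ℝ => (rlKernel γ (t - p.1) * rlKernel β (p.1 - p.2)) • f p.2)
      ((volume.restrict (Ioo 0 t)).prod (volume.restrict (Ioo 0 t))) :=
    (((measurable_rlKernel γ).comp (measurable_const.sub measurable_fst)).mul
      ((measurable_rlKernel β).comp (measurable_fst.sub measurable_snd))).aestronglyMeasurable.smul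
      hfm.comp_snd
  have hfM' : ∀ᵐ r ∂volume.restrict (Ioo 0 t), ‖f r‖ ≤ M :=
    (ae_restrict_mem measurableSet_Ioo).mono hfM
  refine (integrable_prod_iff hFm).2 ⟨ae_of_all _ fun s => ?_, ?_⟩
  · simp only [mul_smul]
    exact ((((integrableOn_rlKernel_sub hβ s).mono_set Ioo_subset_Ioi_self).smul_bdd M hfm
      hfM').smul (rlKernel γ (t - s)))
  refine Integrable.mono' ((((integrableOn_rlKernel_sub hγ t).mono_set
    Ioo_subset_Ioi_self).mul_const (M * t ^ β / Gamma (β + 1)))) hFm.norm.integral_prod_right' ?_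
  filter_upwards [ae_restrict_mem measurableSet_Ioo] with s hs
  have hinner : ∫ r in Ioo 0 t, ‖(rlKernel γ (t - s) * rlKernel β (s - r)) • f r‖ =
      rlKernel γ (t - s) * fracIntH ℝ β (fun r => ‖f r‖) s := by
    rw [fracIntH_eq_setIntegral_rlKernel β _ hs.2.le, ← integral_const_mul]
    refine integral_congr_ae (ae_of_all _ fun r => ?_)
    simp only [norm_smul, norm_mul, norm_of_nonneg (rlKernel_nonneg hβ _),
      norm_of_nonneg (rlKernel_nonneg hγ _), smul_eq_mul, mul_assoc]
  have hbound : fracIntH ℝ β (fun r => ‖f r‖) s ≤ M * t ^ β / Gamma (β + 1) :=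
    (le_norm_self _).trans <| norm_fracIntH_le_of_mem_Ioo hβ hs fun r hr =>
      (norm_norm (f r)).trans_le (hfM r hr)
  rw [hinner, norm_of_nonneg (mul_nonneg (rlKernel_nonneg hγ _) ?_)]
  · exact mul_le_mul_of_nonneg_left hbound (rlKernel_nonneg hγ _)
  · rw [fracIntH_eq_setIntegral_rlKernel β _ hs.2.le]
    exact integral_nonneg fun r => mul_nonneg (rlKernel_nonneg hβ _) (norm_nonneg _)

theorem fracIntH_fracIntH [CompleteSpace H] (hβ : 0 < β) (hγ : 0 < γ)
    (hfm : AEStronglyMeasurable f (volume.restrict (Ioo 0 t)))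
    (hfM : ∀ r ∈ Ioo 0 t, ‖f r‖ ≤ M) :
    fracIntH H γ (fracIntH H β f) t = fracIntH H (β + γ) f t := by
  set μ := volume.restrict (Ioo (0 : ℝ) t)
  calc fracIntH H γ (fracIntH H β f) t
      = ∫ s, ∫ r, (rlKernel γ (t - s) * rlKernel β (s - r)) • f r ∂μ ∂μ := by
        rw [fracIntH_eq_setIntegral_rlKernel γ _ le_rfl]
        refine integral_congr_ae ?_
        filter_upwards [ae_restrict_mem measurableSet_Ioo] with s hs
        simp only [fracIntH_eq_setIntegral_rlKernel β f hs.2.le, mul_smul, integral_smul]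
        rfl
    _ = ∫ r, ∫ s, (rlKernel γ (t - s) * rlKernel β (s - r)) • f r ∂μ ∂μ :=
        integral_integral_swap (integrable_rlKernel_mul_rlKernel_smul hβ hγ hfm hfM)
    _ = ∫ r, rlKernel (β + γ) (t - r) • f r ∂μ := by
        refine integral_congr_ae ?_
        filter_upwards [ae_restrict_mem measurableSet_Ioo] with r hr
        rw [integral_smul_const, setIntegral_eq_integral_of_forall_compl_eq_zero fun s hs => ?_,
          integral_rlKernel_mul_rlKernel hβ hγ]
        rcases le_or_gt s 0 with hs0 | hs0
        · rw [rlKernel_of_nonpos (by linarith [hr.1] : s - r ≤ 0), mul_zero]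
        · rw [rlKernel_of_nonpos (sub_nonpos.2 (not_lt.1 fun hst => hs ⟨hs0, hst⟩)), zero_mul]
    _ = fracIntH H (β + γ) f t := (fracIntH_eq_setIntegral_rlKernel _ f le_rfl).symm

end FracInt

/-- For every `α ∈ (0,1)` there is a constant `C > 0` (depending only on `α`) such that
for every real Hilbert space `H`, every `T > 0`, every continuously differentiable
`v : [0,T] → H` (with derivative `v'`), and every `t ∈ (0,T]`,
`‖v(t) − v(0)‖² ≤ C t^α ∫_0^t ‖(I^{(1−α)/2} v′)(s)‖² ds`. -/
theorem sq_norm_sub_le_fracInt (α : ℝ) (hα0 : 0 < α) (hα1 : α < 1) :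
    ∃ C : ℝ, 0 < C ∧
      ∀ (H : Type) [NormedAddCommGroup H] [InnerProductSpace ℝ H] [CompleteSpace H],
        ∀ T : ℝ, 0 < T →
          ∀ v v' : ℝ → H, (∀ s ∈ Set.Icc (0 : ℝ) T, HasDerivAt v (v' s) s) →
            ContinuousOn v' (Set.Icc 0 T) →
            ∀ t ∈ Set.Ioc (0 : ℝ) T,
              ‖v t - v 0‖ ^ 2 ≤
                C * t ^ α *
                  ∫ s in Set.Ioc (0 : ℝ) t, ‖fracIntH H ((1 - α) / 2) v' s‖ ^ 2 := by
  have hβ : 0 < (1 - α) / 2 := by linarith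
  have hγ : 1 / 2 < (1 + α) / 2 := by linarith
  refine ⟨Gamma α / Gamma ((1 + α) / 2) ^ 2 / Gamma (α + 1), by positivity, ?_⟩
  intro H _ _ _ T _ v v' hv hv' t ⟨ht0, htT⟩
  have hv't : ContinuousOn v' (Icc 0 t) := hv'.mono (Icc_subset_Icc_right htT)
  obtain ⟨M, hM⟩ := isCompact_Icc.exists_bound_of_continuousOn hv't
  have hv'm : AEStronglyMeasurable v' (volume.restrict (Ioo 0 t)) :=
    (hv't.mono Ioo_subset_Icc_self).aestronglyMeasurable measurableSet_Ioo
  have hv'M : ∀ r ∈ Ioo 0 t, ‖v' r‖ ≤ M := fun r hr => hM r (Ioo_subset_Icc_self hr)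
  have hsemigroup : v t - v 0 = fracIntH H ((1 + α) / 2) (fracIntH H ((1 - α) / 2) v') t := by
    rw [fracIntH_fracIntH hβ (by linarith) hv'm hv'M, show (1 - α) / 2 + (1 + α) / 2 = 1 by ring,
      fracIntH_one_eq_sub ht0.le (fun s hs => hv s (Icc_subset_Icc_right htT hs)) hv't]
  rw [hsemigroup, integral_Ioc_eq_integral_Ioo]
  convert sq_norm_fracIntH_le hγ ht0.le (memLp_fracIntH hβ 2 hv'm hv'M) using 2
  rw [show 2 * ((1 + α) / 2) - 1 = α by ring, show 2 * ((1 + α) / 2) = α + 1 by ring]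
  ring
end
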